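/- arXiv:1612.05103 — 7 statements merged into one kernel-verified Lean document; each statement's English description precedes it below -/
import Mathlib

section
/- Let 0 < γ < 1, T ∈ (0, ∞], and let φ : [0, T) → ℝ be continuously differentiable. Then for every t ∈ (0, T), ∫_0^t (t−s)^{−γ} φ′(s) ds = (φ(t) − φ(0))/t^γ + γ ∫_0^t (φ(t) − φ(s)) (t−s)^{−γ−1} ds; in particular the Caputo derivative D_c^γ φ of order γ admits the integrated representation D_c^γ φ(t) = (1/Γ(1−γ)) [ (φ(t) − φ(0))/t^γ + γ ∫_0^t (φ(t) − φ(s))/(t−s)^{γ+1} ds ]. -/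
/-!
Integrate by parts against the function `ψ s = (φ t - φ s) (t - s)^(-γ)`, whose derivative on
`(0, t)` is `-(t - s)^(-γ) φ' s + γ (φ t - φ s) (t - s)^(-γ-1)`. By the mean value theorem
`|ψ s| ≤ C (t - s)^(1-γ)`, so `ψ` extends continuously by `ψ t = 0`, and the second summand is
dominated by `C (t - s)^(-γ)`, which is integrable since `γ < 1`. The fundamental theorem of
calculus then gives `-ψ 0 = ∫₀ᵗ ψ'`, which is the identity.
-/

open MeasureTheory Set Filter Topology
open scoped ENNReal

theorem intervalIntegrable_sub_rpow {r : ℝ} (hr : -1 < r) (a b : ℝ) :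
    IntervalIntegrable (fun s => (b - s) ^ r) volume a b := by
  simpa using
    ((intervalIntegral.intervalIntegrable_rpow' hr (a := b - a) (b := 0)).comp_sub_left b)

theorem abs_mul_rpow_le_of_abs_le {u x C : ℝ} (hx : 0 ≤ x) (hC : 0 ≤ C) (hu : |u| ≤ C * x)
    (r : ℝ) : |u * x ^ r| ≤ C * x ^ (r + 1) := by
  obtain rfl | hx := hx.eq_or_lt
  · have hu0 : u = 0 := abs_nonpos_iff.1 (by simpa using hu)
    simp only [hu0, zero_mul, abs_zero]
    positivity
  · rw [abs_mul, abs_of_pos (Real.rpow_pos_of_pos hx r), Real.rpow_add_one hx.ne']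
    calc |u| * x ^ r ≤ C * x * x ^ r := by gcongr
      _ = C * (x ^ r * x) := by ring

section

variable {a b r : ℝ} {φ φ' : ℝ → ℝ}

theorem exists_abs_sub_le_mul_sub (hφ : ∀ s ∈ Icc a b, HasDerivAt φ (φ' s) s)
    (hφ' : ContinuousOn φ' (Icc a b)) :
    ∃ C, 0 ≤ C ∧ ∀ s ∈ Icc a b, |φ b - φ s| ≤ C * (b - s) := by
  obtain ⟨C, hC⟩ := isCompact_Icc.exists_bound_of_continuousOn hφ'
  refine ⟨max C 0, le_max_right _ _, fun s hs => ?_⟩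
  have hb : b ∈ Icc a b := ⟨hs.1.trans hs.2, le_rfl⟩
  have := (convex_Icc a b).norm_image_sub_le_of_norm_hasDerivWithin_le
    (fun x hx => (hφ x hx).hasDerivWithinAt) (fun x hx => (hC x hx).trans (le_max_left C 0))
    hs hb
  rwa [Real.norm_eq_abs, Real.norm_eq_abs, abs_of_nonneg (sub_nonneg.2 hs.2)] at this

theorem continuousOn_sub_mul_sub_rpow {C : ℝ} (hC0 : 0 ≤ C)
    (hC : ∀ s ∈ Icc a b, |φ b - φ s| ≤ C * (b - s)) (hr : -1 < r)
    (hφ : ContinuousOn φ (Icc a b)) :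
    ContinuousOn (fun s => (φ b - φ s) * (b - s) ^ r) (Icc a b) := by
  intro s hs
  obtain hsb | hsb := hs.2.eq_or_lt
  · subst hsb
    simp only [ContinuousWithinAt, sub_self, zero_mul]
    refine squeeze_zero_norm' (a := fun x => C * (s - x) ^ (r + 1)) ?_ ?_
    · filter_upwards [self_mem_nhdsWithin] with x hx
      exact abs_mul_rpow_le_of_abs_le (sub_nonneg.2 hx.2) hC0 (hC x hx) r
    · have hcont : ContinuousAt (fun x => C * (s - x) ^ (r + 1)) s :=
        ((continuousAt_const.sub continuousAt_id).rpow_const (Or.inr (by linarith))).const_mul C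
      simpa [Real.zero_rpow (by linarith : r + 1 ≠ 0)] using
        hcont.tendsto.mono_left nhdsWithin_le_nhds
  · exact (continuousWithinAt_const.sub (hφ s hs)).mul
      ((continuousAt_const.sub continuousAt_id).rpow_const
        (Or.inl (sub_ne_zero.2 hsb.ne'))).continuousWithinAt

theorem intervalIntegrable_sub_mul_sub_rpow {C : ℝ} (hC0 : 0 ≤ C)
    (hC : ∀ s ∈ Icc a b, |φ b - φ s| ≤ C * (b - s)) (hr : -1 < r) (hab : a ≤ b)
    (hφ : ContinuousOn φ (Icc a b)) :
    IntervalIntegrable (fun s => (φ b - φ s) * (b - s) ^ (r - 1)) volume a b := by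
  refine ((intervalIntegrable_sub_rpow hr a b).const_mul C).mono_fun ?_ ?_
  · rw [uIoc_of_le hab]
    exact (((continuousOn_const.sub hφ).aestronglyMeasurable measurableSet_Icc).mono_measure
      (Measure.restrict_mono Ioc_subset_Icc_self le_rfl)).mul
      (by fun_prop : Measurable fun s => (b - s) ^ (r - 1)).aestronglyMeasurable
  · rw [uIoc_of_le hab, EventuallyLE, ae_restrict_iff' measurableSet_Ioc]
    refine Eventually.of_forall fun s hs => ?_
    have hs' : s ∈ Icc a b := Ioc_subset_Icc_self hs
    have hsb : 0 ≤ b - s := sub_nonneg.2 hs.2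
    simpa [abs_of_nonneg hC0, abs_of_nonneg (Real.rpow_nonneg hsb r)] using
      abs_mul_rpow_le_of_abs_le hsb hC0 (hC s hs') (r - 1)

theorem hasDerivAt_sub_mul_sub_rpow {s φ's : ℝ} (hφ : HasDerivAt φ φ's s)
    (hs : s < b) (r : ℝ) :
    HasDerivAt (fun x => (φ b - φ x) * (b - x) ^ r)
      (-((b - s) ^ r * φ's) - r * ((φ b - φ s) * (b - s) ^ (r - 1))) s := by
  have hsub : HasDerivAt (fun x => (b - x) ^ r) (-1 * r * (b - s) ^ (r - 1)) s :=
    ((hasDerivAt_id s).const_sub b).rpow_const (Or.inl (sub_ne_zero.2 hs.ne'))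
  exact ((hφ.const_sub (φ b)).mul hsub).congr_deriv (by ring)

theorem integral_sub_rpow_mul_deriv (hab : a ≤ b) (hr : -1 < r)
    (hφ : ∀ s ∈ Icc a b, HasDerivAt φ (φ' s) s) (hφ' : ContinuousOn φ' (Icc a b)) :
    ∫ s in a..b, (b - s) ^ r * φ' s =
      (φ b - φ a) * (b - a) ^ r - r * ∫ s in a..b, (φ b - φ s) * (b - s) ^ (r - 1) := by
  have hφc : ContinuousOn φ (Icc a b) := fun s hs =>
    (hφ s hs).continuousAt.continuousWithinAt
  obtain ⟨C, hC0, hC⟩ := exists_abs_sub_le_mul_sub hφ hφ'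
  have hI₁ : IntervalIntegrable (fun s => (b - s) ^ r * φ' s) volume a b :=
    (intervalIntegrable_sub_rpow hr a b).mul_continuousOn (by rwa [uIcc_of_le hab])
  have hI₂ := (intervalIntegrable_sub_mul_sub_rpow hC0 hC hr hab hφc).const_mul r
  have hFTC := intervalIntegral.integral_eq_sub_of_hasDeriv_right_of_le hab
    (continuousOn_sub_mul_sub_rpow hC0 hC hr hφc)
    (fun s hs =>
      (hasDerivAt_sub_mul_sub_rpow (hφ s (Ioo_subset_Icc_self hs)) hs.2 r).hasDerivWithinAt)
    (hI₁.neg.sub hI₂)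
  rw [intervalIntegral.integral_sub (f := fun s => -((b - s) ^ r * φ' s)) hI₁.neg hI₂,
    intervalIntegral.integral_neg, intervalIntegral.integral_const_mul] at hFTC
  simp only [sub_self, zero_mul, zero_sub] at hFTC
  linarith

end

theorem caputo_integrated_representation_general
    (T : ℝ≥0∞) (γ : ℝ) (hγ1 : γ < 1)
    (φ φ' : ℝ → ℝ)
    (hderiv : ∀ t : ℝ, 0 ≤ t → ENNReal.ofReal t < T → HasDerivAt φ (φ' t) t)
    (hcont : ContinuousOn φ' {t : ℝ | 0 ≤ t ∧ ENNReal.ofReal t < T}) :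
    ∀ t : ℝ, 0 < t → ENNReal.ofReal t < T →
      (∫ s in (0:ℝ)..t, (t - s) ^ (-γ) * φ' s) =
        (φ t - φ 0) / t ^ γ +
          γ * ∫ s in (0:ℝ)..t, (φ t - φ s) * (t - s) ^ (-γ - 1) ∧
      (1 / Real.Gamma (1 - γ)) * ∫ s in (0:ℝ)..t, (t - s) ^ (-γ) * φ' s =
        (1 / Real.Gamma (1 - γ)) *
          ((φ t - φ 0) / t ^ γ +
            γ * ∫ s in (0:ℝ)..t, (φ t - φ s) / (t - s) ^ (γ + 1)) := by
  intro t ht htT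
  have hsub : Icc 0 t ⊆ {s : ℝ | 0 ≤ s ∧ ENNReal.ofReal s < T} := fun s hs =>
    ⟨hs.1, (ENNReal.ofReal_le_ofReal hs.2).trans_lt htT⟩
  have key := integral_sub_rpow_mul_deriv ht.le (neg_lt_neg hγ1)
    (fun s hs => hderiv s (hsub hs).1 (hsub hs).2) (hcont.mono hsub)
  rw [sub_zero, Real.rpow_neg ht.le, ← div_eq_mul_inv, neg_mul, sub_neg_eq_add] at key
  refine ⟨key, ?_⟩
  have hrpow : ∀ s ∈ uIcc 0 t,
      (φ t - φ s) * (t - s) ^ (-γ - 1) = (φ t - φ s) / (t - s) ^ (γ + 1) := fun s hs => by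
    rw [uIcc_of_le ht.le] at hs
    rw [show -γ - 1 = -(γ + 1) by ring, Real.rpow_neg (sub_nonneg.2 hs.2), div_eq_mul_inv]
  rw [key, intervalIntegral.integral_congr hrpow]

/-- For `0 < γ < 1`, `T ∈ (0, ∞]` and `φ` continuously differentiable on `[0, T)`,
for every `t ∈ (0,T)`:
`∫_0^t (t−s)^{−γ} φ'(s) ds = (φ(t)−φ(0))/t^γ + γ ∫_0^t (φ(t)−φ(s))(t−s)^{−γ−1} ds`,
and therefore the Caputo derivative admits the integrated representation
`D_c^γ φ(t) = (1/Γ(1−γ)) [ (φ(t)−φ(0))/t^γ + γ ∫_0^t (φ(t)−φ(s))/(t−s)^{γ+1} ds ]`. -/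
theorem caputo_integrated_representation
    (T : ℝ≥0∞) (hT : 0 < T) (γ : ℝ) (hγ0 : 0 < γ) (hγ1 : γ < 1)
    (φ φ' : ℝ → ℝ)
    (hderiv : ∀ t : ℝ, 0 ≤ t → ENNReal.ofReal t < T → HasDerivAt φ (φ' t) t)
    (hcont : ContinuousOn φ' {t : ℝ | 0 ≤ t ∧ ENNReal.ofReal t < T}) :
    ∀ t : ℝ, 0 < t → ENNReal.ofReal t < T →
      (∫ s in (0:ℝ)..t, (t - s) ^ (-γ) * φ' s) =
        (φ t - φ 0) / t ^ γ +
          γ * ∫ s in (0:ℝ)..t, (φ t - φ s) * (t - s) ^ (-γ - 1) ∧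
      (1 / Real.Gamma (1 - γ)) * ∫ s in (0:ℝ)..t, (t - s) ^ (-γ) * φ' s =
        (1 / Real.Gamma (1 - γ)) *
          ((φ t - φ 0) / t ^ γ +
            γ * ∫ s in (0:ℝ)..t, (φ t - φ s) / (t - s) ^ (γ + 1)) :=
  caputo_integrated_representation_general T γ hγ1 φ φ' hderiv hcont
end

section
/- Let 0 < γ < 1, T ∈ (0, ∞], let E : ℝ → ℝ be convex and continuously differentiable, and let φ : [0, T) → ℝ be continuously differentiable. Then for every t ∈ (0, T), the Caputo derivative of E ∘ φ satisfies D_c^γ (E ∘ φ)(t) ≤ E′(φ(t)) · D_c^γ φ(t); that is, (1/Γ(1−γ)) ∫_0^t (t−s)^{−γ} E′(φ(s)) φ′(s) ds ≤ E′(φ(t)) · (1/Γ(1−γ)) ∫_0^t (t−s)^{−γ} φ′(s) ds. -/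
/-!
Put `F(s) = E(φ s) - E(φ t) - E'(φ t) (φ s - φ t)`. Convexity makes `F ≥ 0`, and `F` vanishes
to first order at `s = t`; the difference of the two sides of the inequality is
`∫₀ᵗ (t - s)^(-γ) F'(s) ds`. Integrating by parts on `[0, x]` with `x < t` bounds this integral by
`(t - x)^(-γ) F(x)`, since the boundary term at `0` and the term `γ (t - s)^(-γ-1) F(s)` are
nonnegative. As `x → t⁻`, `(t - x)^(-γ) F(x) = o((t - x)^(1-γ))` tends to `0` because `γ < 1`.
-/

open MeasureTheory Set Filter
open scoped ENNReal Topology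

lemma ConvexOn.add_mul_sub_le_of_hasDerivAt {S : Set ℝ} {f : ℝ → ℝ} {f' x y : ℝ}
    (hfc : ConvexOn ℝ S f) (hx : x ∈ S) (hy : y ∈ S) (hf : HasDerivAt f f' x) :
    f x + f' * (y - x) ≤ f y := by
  rcases lt_trichotomy x y with hxy | rfl | hxy
  · have hslope := hfc.le_slope_of_hasDerivAt hx hy hxy hf
    rw [slope_def_field, le_div_iff₀ (sub_pos.2 hxy)] at hslope
    linarith
  · simp
  · have hslope := hfc.slope_le_of_hasDerivAt hy hx hxy hf
    rw [slope_def_field, div_le_iff₀ (sub_pos.2 hxy)] at hslope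
    linarith

section CaputoKernel

variable {t γ : ℝ}

lemma intervalIntegrable_sub_rpow_neg_mul (ht : 0 ≤ t) (hγ : γ < 1) {g : ℝ → ℝ}
    (hg : ContinuousOn g (Icc 0 t)) :
    IntervalIntegrable (fun s => (t - s) ^ (-γ) * g s) volume 0 t := by
  have hkernel : IntervalIntegrable (fun s : ℝ => (t - s) ^ (-γ)) volume 0 t := by
    have hpow : IntervalIntegrable (fun s : ℝ => s ^ (-γ)) volume 0 t :=
      intervalIntegral.intervalIntegrable_rpow' (by linarith)
    simpa using (hpow.comp_sub_left t).symm
  exact hkernel.mul_continuousOn (by rwa [uIcc_of_le ht])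

lemma hasDerivAt_sub_rpow_neg {s : ℝ} (hs : s < t) :
    HasDerivAt (fun s => (t - s) ^ (-γ)) (γ * (t - s) ^ (-γ - 1)) s := by
  have hsub : HasDerivAt (fun s : ℝ => t - s) (-1) s := by
    simpa using (hasDerivAt_id s).const_sub t
  exact ((Real.hasDerivAt_rpow_const (Or.inl (sub_pos.2 hs).ne')).comp s hsub).congr_deriv
    (by ring)

lemma integral_sub_rpow_neg_mul_deriv_le {F F' : ℝ → ℝ} {x : ℝ} (hγ : 0 ≤ γ) (hx : 0 ≤ x)
    (hxt : x < t) (hF : ∀ s ∈ Icc 0 x, HasDerivAt F (F' s) s)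
    (hF' : ContinuousOn F' (Icc 0 x)) (hF_nonneg : ∀ s ∈ Icc 0 x, 0 ≤ F s) :
    ∫ s in 0..x, (t - s) ^ (-γ) * F' s ≤ (t - x) ^ (-γ) * F x := by
  rw [← uIcc_of_le hx] at hF hF'
  have hkernel : ∀ s ∈ uIcc 0 x,
      HasDerivAt (fun s => (t - s) ^ (-γ)) (γ * (t - s) ^ (-γ - 1)) s := fun s hs =>
    hasDerivAt_sub_rpow_neg (by rw [uIcc_of_le hx] at hs; linarith [hs.2])
  have hkernel_deriv : ContinuousOn (fun s => γ * (t - s) ^ (-γ - 1)) (uIcc 0 x) := by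
    refine continuousOn_const.mul (ContinuousOn.rpow_const (by fun_prop) fun s hs => ?_)
    rw [uIcc_of_le hx] at hs
    exact Or.inl (by linarith [hs.2])
  rw [intervalIntegral.integral_mul_deriv_eq_deriv_mul hkernel hF
    hkernel_deriv.intervalIntegrable hF'.intervalIntegrable]
  have hboundary : 0 ≤ (t - 0) ^ (-γ) * F 0 :=
    mul_nonneg (Real.rpow_nonneg (by linarith) _) (hF_nonneg 0 (left_mem_Icc.2 hx))
  have hremainder : 0 ≤ ∫ s in 0..x, γ * (t - s) ^ (-γ - 1) * F s := by
    refine intervalIntegral.integral_nonneg hx fun s hs => ?_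
    have := hF_nonneg s hs
    have : 0 ≤ (t - s) ^ (-γ - 1) := Real.rpow_nonneg (by linarith [hs.2]) _
    positivity
  linarith

lemma tendsto_sub_rpow_neg_mul_nhdsLT (hγ : γ < 1) {F : ℝ → ℝ} (hF : HasDerivAt F 0 t)
    (hFt : F t = 0) : Tendsto (fun x => (t - x) ^ (-γ) * F x) (𝓝[<] t) (𝓝 0) := by
  have hslope : Tendsto (slope F t) (𝓝[<] t) (𝓝 0) :=
    (hasDerivAt_iff_tendsto_slope.mp hF).mono_left (nhdsWithin_mono t fun x hx => ne_of_lt hx)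
  have hpow : Tendsto (fun x => (t - x) ^ (1 - γ)) (𝓝[<] t) (𝓝 0) := by
    have hcont : Continuous fun x : ℝ => (t - x) ^ (1 - γ) :=
      (continuous_const.sub continuous_id).rpow_const fun _ => Or.inr (by linarith)
    simpa [Real.zero_rpow (by linarith : 1 - γ ≠ 0)] using
      (hcont.tendsto t).mono_left nhdsWithin_le_nhds
  have hprod := (hslope.mul hpow).neg
  rw [zero_mul, neg_zero] at hprod
  refine hprod.congr' ?_
  filter_upwards [self_mem_nhdsWithin] with x (hx : x < t)
  have hpos : 0 < t - x := sub_pos.2 hx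
  rw [slope_def_field, hFt, show 1 - γ = 1 + -γ by ring, Real.rpow_add hpos, Real.rpow_one]
  field_simp [(sub_neg.2 hx).ne]
  ring

theorem integral_sub_rpow_neg_mul_deriv_nonpos (ht : 0 < t) (hγ0 : 0 ≤ γ) (hγ1 : γ < 1)
    {F F' : ℝ → ℝ} (hF : ∀ s ∈ Icc 0 t, HasDerivAt F (F' s) s)
    (hF' : ContinuousOn F' (Icc 0 t)) (hF_nonneg : ∀ s ∈ Icc 0 t, 0 ≤ F s)
    (hFt : F t = 0) (hF't : F' t = 0) :
    ∫ s in 0..t, (t - s) ^ (-γ) * F' s ≤ 0 := by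
  have hIcc : Icc 0 t ∈ 𝓝[<] t := mem_of_superset (Ioo_mem_nhdsLT ht) Ioo_subset_Icc_self
  have hprimitive : Tendsto (fun x => ∫ s in 0..x, (t - s) ^ (-γ) * F' s) (𝓝[<] t)
      (𝓝 (∫ s in 0..t, (t - s) ^ (-γ) * F' s)) := by
    have hcont := intervalIntegral.continuousOn_primitive_interval'
      (intervalIntegrable_sub_rpow_neg_mul ht.le hγ1 hF') left_mem_uIcc
    rw [uIcc_of_le ht.le] at hcont
    exact (hcont t (right_mem_Icc.2 ht.le)).mono_of_mem_nhdsWithin hIcc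
  have hbound := tendsto_sub_rpow_neg_mul_nhdsLT hγ1 (hF't ▸ hF t (right_mem_Icc.2 ht.le)) hFt
  refine le_of_tendsto_of_tendsto hprimitive hbound ?_
  filter_upwards [Ioo_mem_nhdsLT ht] with x hx
  have hsub : Icc 0 x ⊆ Icc 0 t := Icc_subset_Icc le_rfl hx.2.le
  exact integral_sub_rpow_neg_mul_deriv_le hγ0 hx.1.le hx.2 (fun s hs => hF s (hsub hs))
    (hF'.mono hsub) fun s hs => hF_nonneg s (hsub hs)

theorem integral_sub_rpow_neg_mul_deriv_comp_le (ht : 0 < t) (hγ0 : 0 ≤ γ) (hγ1 : γ < 1)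
    {E E' φ φ' : ℝ → ℝ} (hconv : ConvexOn ℝ univ E) (hE : ∀ x, HasDerivAt E (E' x) x)
    (hE' : Continuous E') (hφ : ∀ s ∈ Icc 0 t, HasDerivAt φ (φ' s) s)
    (hφ' : ContinuousOn φ' (Icc 0 t)) :
    ∫ s in 0..t, (t - s) ^ (-γ) * (E' (φ s) * φ' s) ≤
      E' (φ t) * ∫ s in 0..t, (t - s) ^ (-γ) * φ' s := by
  set F : ℝ → ℝ := fun s => E (φ s) - E (φ t) - E' (φ t) * (φ s - φ t)
  set G : ℝ → ℝ := fun s => (E' (φ s) - E' (φ t)) * φ' s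
  have hF : ∀ s ∈ Icc 0 t, HasDerivAt F (G s) s := fun s hs =>
    ((((hE (φ s)).comp s (hφ s hs)).sub_const (E (φ t))).sub
      (((hφ s hs).sub_const (φ t)).const_mul (E' (φ t)))).congr_deriv (by ring)
  have hφc : ContinuousOn φ (Icc 0 t) := fun s hs => (hφ s hs).continuousAt.continuousWithinAt
  have hG : ContinuousOn G (Icc 0 t) := ((hE'.comp_continuousOn hφc).sub continuousOn_const).mul hφ'
  have hF_nonneg : ∀ s ∈ Icc 0 t, 0 ≤ F s := fun s _ => by
    have := hconv.add_mul_sub_le_of_hasDerivAt (mem_univ (φ t)) (mem_univ (φ s)) (hE (φ t))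
    simp only [F]
    linarith
  have hnonpos := integral_sub_rpow_neg_mul_deriv_nonpos ht hγ0 hγ1 hF hG hF_nonneg
    (by simp [F]) (by simp [G])
  have hsplit : ∫ s in 0..t, (t - s) ^ (-γ) * G s =
      (∫ s in 0..t, (t - s) ^ (-γ) * (E' (φ s) * φ' s)) -
        E' (φ t) * ∫ s in 0..t, (t - s) ^ (-γ) * φ' s := by
    have hint : IntervalIntegrable (fun s => (t - s) ^ (-γ) * (E' (φ s) * φ' s)) volume 0 t :=
      intervalIntegrable_sub_rpow_neg_mul ht.le hγ1 ((hE'.comp_continuousOn hφc).mul hφ')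
    rw [← intervalIntegral.integral_const_mul, ← intervalIntegral.integral_sub hint
      ((intervalIntegrable_sub_rpow_neg_mul ht.le hγ1 hφ').const_mul _)]
    exact intervalIntegral.integral_congr fun s _ => by simp only [G]; ring
  linarith

end CaputoKernel

theorem caputo_convexity_inequality_general
    (T : ℝ≥0∞) (γ : ℝ) (hγ0 : 0 < γ) (hγ1 : γ < 1)
    (E E' : ℝ → ℝ)
    (hconv : ConvexOn ℝ Set.univ E)
    (hE : ∀ x : ℝ, HasDerivAt E (E' x) x)
    (hE' : Continuous E')
    (φ φ' : ℝ → ℝ)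
    (hderiv : ∀ t : ℝ, 0 ≤ t → ENNReal.ofReal t < T → HasDerivAt φ (φ' t) t)
    (hcont : ContinuousOn φ' {t : ℝ | 0 ≤ t ∧ ENNReal.ofReal t < T}) :
    ∀ t : ℝ, 0 < t → ENNReal.ofReal t < T →
      (1 / Real.Gamma (1 - γ)) * ∫ s in (0:ℝ)..t, (t - s) ^ (-γ) * (E' (φ s) * φ' s) ≤
        E' (φ t) * ((1 / Real.Gamma (1 - γ)) * ∫ s in (0:ℝ)..t, (t - s) ^ (-γ) * φ' s) := by
  intro t ht htT
  have hlt : ∀ s ∈ Icc 0 t, ENNReal.ofReal s < T := fun s hs =>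
    (ENNReal.ofReal_le_ofReal hs.2).trans_lt htT
  have hmain := integral_sub_rpow_neg_mul_deriv_comp_le ht hγ0.le hγ1 hconv hE hE'
    (fun s hs => hderiv s hs.1 (hlt s hs)) (hcont.mono fun s hs => ⟨hs.1, hlt s hs⟩)
  rw [mul_left_comm]
  exact mul_le_mul_of_nonneg_left hmain
    (one_div_nonneg.2 (Real.Gamma_pos_of_pos (sub_pos.2 hγ1)).le)

/-- Convexity inequality for Caputo derivatives: for `0 < γ < 1`, `T ∈ (0, ∞]`,
`E : ℝ → ℝ` convex and continuously differentiable (with derivative `E'`), and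
`φ` continuously differentiable on `[0, T)` (with derivative `φ'`), for every
`t ∈ (0,T)` the Caputo derivative of `E ∘ φ` satisfies
`D_c^γ (E∘φ)(t) ≤ E'(φ(t)) · D_c^γ φ(t)`. -/
theorem caputo_convexity_inequality
    (T : ℝ≥0∞) (hT : 0 < T) (γ : ℝ) (hγ0 : 0 < γ) (hγ1 : γ < 1)
    (E E' : ℝ → ℝ)
    (hconv : ConvexOn ℝ Set.univ E)
    (hE : ∀ x : ℝ, HasDerivAt E (E' x) x)
    (hE' : Continuous E')
    (φ φ' : ℝ → ℝ)
    (hderiv : ∀ t : ℝ, 0 ≤ t → ENNReal.ofReal t < T → HasDerivAt φ (φ' t) t)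
    (hcont : ContinuousOn φ' {t : ℝ | 0 ≤ t ∧ ENNReal.ofReal t < T}) :
    ∀ t : ℝ, 0 < t → ENNReal.ofReal t < T →
      (1 / Real.Gamma (1 - γ)) * ∫ s in (0:ℝ)..t, (t - s) ^ (-γ) * (E' (φ s) * φ' s) ≤
        E' (φ t) * ((1 / Real.Gamma (1 - γ)) * ∫ s in (0:ℝ)..t, (t - s) ^ (-γ) * φ' s) :=
  caputo_convexity_inequality_general T γ hγ0 hγ1 E E' hconv hE hE' φ φ' hderiv hcont
end

section
/- Let 0 < γ < 1, λ ∈ ℝ with λ ≠ 0, v₀ ∈ ℝ, and let b : [0, ∞) → ℝ be continuous. Define v(t) = v₀ E_γ(λ t^γ) + ∫_0^t b(t−s) s^{γ−1} E_{γ,γ}(λ s^γ) ds. Then v is continuous on [0, ∞), v(0) = v₀, and v satisfies the Volterra integral equation v(t) = v₀ + (1/Γ(γ)) ∫_0^t (t−s)^{γ−1} ( λ v(s) + b(s) ) ds for every t ≥ 0; that is, v solves the fractional ODE D_c^γ v = λ v + b(t) with v(0) = v₀. -/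
/-!
Write `k(x) = x^(γ-1)`, `e_ρ(s) = s^(ρ-1) E_{γ,ρ}(λ s^γ)` (`mittagLefflerKernel γ ρ λ`) and
`(f ⋆ g)(t) = ∫_0^t f(t-s) g(s) ds` (`causalConv f g t`). Then `E_γ(λ t^γ) = e_1(t)`, the forcing
term is `w = b ⋆ e_γ`, and the Volterra operator is `Γ(γ)⁻¹ (k ⋆ ·)`. Integrating the series of
`e_ρ` termwise against Beta integrals gives `k ⋆ e_ρ = Γ(γ) e_{ρ+γ}`, and shifting the index of
the series gives `e_ρ(s) = s^(ρ-1) / Γ(ρ) + λ e_{ρ+γ}(s)`. For the homogeneous part these combine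
to `Γ(γ) e_1 = Γ(γ) + λ (k ⋆ e_1)`. For the forcing part, Fubini on the triangle
`0 < u ≤ s ≤ t` lets the two convolutions commute, so
`λ (k ⋆ (b ⋆ e_γ)) + k ⋆ b = b ⋆ (λ Γ(γ) e_{2γ} + k) = Γ(γ) (b ⋆ e_γ)`.
The series converge because log-convexity of `Γ` gives `Γ(x) (x+γ-1)^γ ≤ Γ(x+γ)`.
-/

open MeasureTheory Set Filter intervalIntegral
open scoped Topology

/-- The Mittag-Leffler function `E_γ(z) = Σ_{n=0}^∞ z^n / Γ(γ n + 1)`. -/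
noncomputable def mittagLeffler (γ z : ℝ) : ℝ :=
  ∑' n : ℕ, z ^ n / Real.Gamma (γ * n + 1)

/-- The two-parameter Mittag-Leffler function `E_{γ,ρ}(z) = Σ_{n=0}^∞ z^n / Γ(γ n + ρ)`. -/
noncomputable def mittagLeffler2 (γ ρ z : ℝ) : ℝ :=
  ∑' n : ℕ, z ^ n / Real.Gamma (γ * n + ρ)

theorem Real.Gamma_mul_rpow_le_Gamma_add {γ x : ℝ} (hγ0 : 0 < γ) (hγ1 : γ < 1)
    (hx : 1 - γ < x) : Real.Gamma x * (x + γ - 1) ^ γ ≤ Real.Gamma (x + γ) := by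
  have ha : 0 < x + γ - 1 := by linarith
  have hΓx := Real.Gamma_pos_of_pos (by linarith : 0 < x)
  have hΓa := Real.Gamma_pos_of_pos ha
  have hconv := Real.convexOn_log_Gamma.2 (mem_Ioi.2 ha) (mem_Ioi.2 (by linarith : 0 < x + γ))
    hγ0.le (by linarith : 0 ≤ 1 - γ) (by ring)
  have hrec : Real.Gamma (x + γ) = (x + γ - 1) * Real.Gamma (x + γ - 1) := by
    simpa using Real.Gamma_add_one ha.ne'
  simp only [smul_eq_mul, Function.comp_apply, hrec, Real.log_mul ha.ne' hΓa.ne',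
    show γ * (x + γ - 1) + (1 - γ) * (x + γ) = x by ring] at hconv
  rw [hrec, ← Real.log_le_log_iff (by positivity) (by positivity), Real.log_mul hΓx.ne'
    (by positivity), Real.log_mul ha.ne' hΓa.ne', Real.log_rpow ha]
  linarith

theorem summable_mittagLeffler2 {γ ρ : ℝ} (hγ0 : 0 < γ) (hγ1 : γ < 1) (hρ : 0 < ρ) (z : ℝ) :
    Summable fun n : ℕ => z ^ n / Real.Gamma (γ * n + ρ) := by
  have hlin : Tendsto (fun n : ℕ => γ * n + (ρ + γ - 1)) atTop atTop :=
    tendsto_atTop_add_const_right _ _ (tendsto_natCast_atTop_atTop.const_mul_atTop hγ0)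
  have hgrowth := ((tendsto_rpow_atTop hγ0).comp hlin).eventually_ge_atTop (2 * |z|)
  refine summable_of_ratio_norm_eventually_le (r := 1 / 2) (by norm_num) ?_
  filter_upwards [hgrowth,
    (tendsto_natCast_atTop_atTop.const_mul_atTop hγ0).eventually_ge_atTop 1] with n hn hn1
  simp only [Function.comp_apply] at hn
  have hx : 1 - γ < γ * n + ρ := by linarith
  have hG : 0 < Real.Gamma (γ * n + ρ) := Real.Gamma_pos_of_pos (by linarith)
  have hstep : 2 * |z| * Real.Gamma (γ * n + ρ) ≤ Real.Gamma (γ * (n + 1 : ℕ) + ρ) := by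
    rw [show γ * ((n + 1 : ℕ) : ℝ) + ρ = γ * n + ρ + γ by push_cast; ring]
    calc 2 * |z| * Real.Gamma (γ * n + ρ)
        ≤ (γ * n + ρ + γ - 1) ^ γ * Real.Gamma (γ * n + ρ) := by
          gcongr; exact hn.trans_eq (by ring_nf)
      _ ≤ Real.Gamma (γ * n + ρ + γ) := by
          rw [mul_comm]; exact Real.Gamma_mul_rpow_le_Gamma_add hγ0 hγ1 hx
  have hG' : 0 < Real.Gamma (γ * (n + 1 : ℕ) + ρ) :=
    Real.Gamma_pos_of_pos (by push_cast; nlinarith)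
  rw [norm_div, norm_div, norm_pow, norm_pow, Real.norm_of_nonneg hG.le,
    Real.norm_of_nonneg hG'.le, Real.norm_eq_abs, div_le_iff₀ hG', pow_succ]
  calc |z| ^ n * |z| = 1 / 2 * (|z| ^ n / Real.Gamma (γ * n + ρ)) *
        (2 * |z| * Real.Gamma (γ * n + ρ)) := by field_simp
    _ ≤ 1 / 2 * (|z| ^ n / Real.Gamma (γ * n + ρ)) * Real.Gamma (γ * (n + 1 : ℕ) + ρ) := by
      gcongr

theorem continuous_mittagLeffler2 {γ ρ : ℝ} (hγ0 : 0 < γ) (hγ1 : γ < 1) (hρ : 0 < ρ) :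
    Continuous (mittagLeffler2 γ ρ) := by
  refine continuous_iff_continuousAt.2 fun z => ?_
  set R := |z| + 1
  have hR : ContinuousOn (mittagLeffler2 γ ρ) (Icc (-R) R) := by
    refine continuousOn_tsum (fun n => by fun_prop) (summable_mittagLeffler2 hγ0 hγ1 hρ R)
      fun n y hy => ?_
    have hG := Real.Gamma_pos_of_pos (by positivity : 0 < γ * n + ρ)
    rw [norm_div, norm_pow, Real.norm_eq_abs, Real.norm_of_nonneg hG.le]
    gcongr
    exact abs_le.2 hy
  exact hR.continuousAt
    (Icc_mem_nhds (by linarith [neg_abs_le z]) (by linarith [le_abs_self z]))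

theorem mittagLeffler2_eq_inv_Gamma_add {γ ρ : ℝ} (hγ0 : 0 < γ) (hγ1 : γ < 1) (hρ : 0 < ρ)
    (z : ℝ) : mittagLeffler2 γ ρ z = 1 / Real.Gamma ρ + z * mittagLeffler2 γ (ρ + γ) z := by
  rw [mittagLeffler2, (summable_mittagLeffler2 hγ0 hγ1 hρ z).tsum_eq_zero_add, mittagLeffler2,
    ← tsum_mul_left]
  congr 1
  · simp
  · refine tsum_congr fun n => ?_
    rw [pow_succ, show γ * ((n + 1 : ℕ) : ℝ) + ρ = γ * n + (ρ + γ) by push_cast; ring]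
    ring

theorem mittagLeffler2_zero (γ ρ : ℝ) : mittagLeffler2 γ ρ 0 = 1 / Real.Gamma ρ := by
  rw [mittagLeffler2, tsum_eq_single 0 fun n hn => by simp [hn]]
  simp

noncomputable def causalConv (f g : ℝ → ℝ) (t : ℝ) : ℝ :=
  ∫ s in (0 : ℝ)..t, f (t - s) * g s

theorem causalConv_congr {f g₁ g₂ : ℝ → ℝ} {t : ℝ} (ht : 0 ≤ t)
    (h : ∀ s ∈ Ioc 0 t, g₁ s = g₂ s) : causalConv f g₁ t = causalConv f g₂ t := by
  simp only [causalConv, integral_of_le ht]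
  exact setIntegral_congr_fun measurableSet_Ioc fun s hs => by rw [h s hs]

theorem causalConv_add {f g₁ g₂ : ℝ → ℝ} {t : ℝ}
    (h₁ : IntervalIntegrable (fun s => f (t - s) * g₁ s) volume 0 t)
    (h₂ : IntervalIntegrable (fun s => f (t - s) * g₂ s) volume 0 t) :
    causalConv f (fun s => g₁ s + g₂ s) t = causalConv f g₁ t + causalConv f g₂ t := by
  simp only [causalConv, mul_add]
  exact integral_add h₁ h₂

theorem causalConv_const_mul (f g : ℝ → ℝ) (c t : ℝ) :
    causalConv f (fun s => c * g s) t = c * causalConv f g t := by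
  simp only [causalConv, mul_left_comm _ c, intervalIntegral.integral_const_mul]

theorem causalConv_comm (f g : ℝ → ℝ) (t : ℝ) : causalConv f g t = causalConv g f t := by
  simpa [causalConv, mul_comm] using (integral_comp_sub_left (fun s => f (t - s) * g s) t
    (a := 0) (b := t)).symm

theorem causalConv_rpow_rpow {a b t : ℝ} (ha : 0 < a) (hb : 0 < b) (ht : 0 < t) :
    causalConv (fun x => x ^ (a - 1)) (fun x => x ^ (b - 1)) t =
      Real.Gamma a * Real.Gamma b / Real.Gamma (a + b) * t ^ (a + b - 1) := by
  have hbeta := Complex.betaIntegral_scaled b a ht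
  rw [Complex.betaIntegral_eq_Gamma_mul_div _ _ (by simpa using hb) (by simpa using ha)] at hbeta
  apply Complex.ofReal_injective
  rw [causalConv, ← integral_ofReal]
  calc ∫ s in (0 : ℝ)..t, (((t - s) ^ (a - 1) * s ^ (b - 1) : ℝ) : ℂ)
      = ∫ s in (0 : ℝ)..t, (s : ℂ) ^ ((b : ℂ) - 1) * ((t : ℂ) - s) ^ ((a : ℂ) - 1) := by
        refine integral_congr fun s hs => ?_
        rw [uIcc_of_le ht.le] at hs
        push_cast [Complex.ofReal_mul, Complex.ofReal_cpow (sub_nonneg.2 hs.2),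
          Complex.ofReal_cpow hs.1]
        ring
    _ = _ := by
        rw [hbeta, ← Complex.ofReal_add, Complex.Gamma_ofReal, Complex.Gamma_ofReal,
          Complex.Gamma_ofReal,
          show ((b + a : ℝ) : ℂ) - 1 = ((a + b - 1 : ℝ) : ℂ) by push_cast; ring,
          ← Complex.ofReal_cpow ht.le, add_comm b a]
        push_cast
        ring

theorem intervalIntegrable_rpow_mul_rpow_sub {a b t : ℝ} (ha : -1 < a) (hb : -1 < b)
    (ht : 0 < t) : IntervalIntegrable (fun s => s ^ a * (t - s) ^ b) volume 0 t := by
  have hleft : IntervalIntegrable (fun s => s ^ a * (t - s) ^ b) volume 0 (t / 2) := by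
    refine (intervalIntegral.intervalIntegrable_rpow' ha).mul_continuousOn
      (ContinuousOn.rpow_const (by fun_prop) fun s hs => Or.inl ?_)
    rw [uIcc_of_le (by linarith)] at hs
    linarith [hs.2]
  have hright : IntervalIntegrable (fun s => s ^ a * (t - s) ^ b) volume (t / 2) t := by
    have hrefl :=
      ((intervalIntegral.intervalIntegrable_rpow' hb (a := 0) (b := t / 2)).comp_sub_left t).symm
    rw [sub_zero, show t - t / 2 = t / 2 by ring] at hrefl
    refine hrefl.continuousOn_mul (ContinuousOn.rpow_const (by fun_prop) fun s hs => Or.inl ?_)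
    rw [uIcc_of_le (by linarith)] at hs
    linarith [hs.1]
  exact hleft.trans hright

theorem continuousOn_causalConv {f g : ℝ → ℝ} (hf : Continuous f)
    (hg : ∀ T, IntervalIntegrable g volume 0 T) : ContinuousOn (causalConv f g) (Ici 0) := by
  intro t₀ ht₀
  set T := t₀ + 1
  have hT : 0 ≤ T := by simp only [T]; linarith [mem_Ici.1 ht₀]
  obtain ⟨C, hC⟩ :=
    (isCompact_Icc (a := 0) (b := T)).exists_bound_of_continuousOn hf.continuousOn
  have hC0 : 0 ≤ C := (norm_nonneg _).trans (hC 0 ⟨le_rfl, hT⟩)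
  have hnear : ∀ᶠ t in 𝓝[Ici 0] t₀, t ∈ Icc 0 T := by
    filter_upwards [self_mem_nhdsWithin, nhdsWithin_le_nhds (Iio_mem_nhds (lt_add_one t₀))]
      with t ht0 htT
    exact ⟨ht0, htT.le⟩
  have hcont : ContinuousWithinAt
      (fun t => ∫ s in (0 : ℝ)..T, {s | s ≤ t}.indicator (fun s => f (t - s) * g s) s)
      (Ici 0) t₀ := by
    refine continuousWithinAt_of_dominated_interval (bound := fun s => C * ‖g s‖)
      (Eventually.of_forall fun t => ?_) (hnear.mono fun t ht => ae_of_all _ fun s hs => ?_)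
      ((hg T).norm.const_mul C) ((volume.ae_ne t₀).mono fun s hs _ => ?_)
    · exact ((hf.comp (continuous_const.sub continuous_id)).aestronglyMeasurable.mul
        (hg T).def'.1).indicator measurableSet_Iic
    · rw [uIoc_of_le hT] at hs
      by_cases hst : s ≤ t
      · rw [indicator_of_mem (show s ∈ {s | s ≤ t} from hst), norm_mul]
        gcongr
        exact hC _ ⟨sub_nonneg.2 hst, by linarith [hs.1, ht.2]⟩
      · rw [indicator_of_notMem (show s ∉ {s | s ≤ t} from hst), norm_zero]
        positivity
    · refine ContinuousAt.continuousWithinAt ?_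
      rcases hs.lt_or_gt with hlt | hgt
      · refine (show Continuous fun t => f (t - s) * g s by fun_prop).continuousAt.congr ?_
        filter_upwards [Ioi_mem_nhds hlt] with t ht
        exact (indicator_of_mem (show s ∈ {s | s ≤ t} from (mem_Ioi.1 ht).le)
          (fun s => f (t - s) * g s)).symm
      · refine (continuousAt_const (y := (0 : ℝ))).congr ?_
        filter_upwards [Iio_mem_nhds hgt] with t ht
        exact (indicator_of_notMem (show s ∉ {s | s ≤ t} from not_le.2 (mem_Iio.1 ht))
          (fun s => f (t - s) * g s)).symm
  refine hcont.congr_of_eventuallyEq (hnear.mono fun t ht => ?_) ?_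
  · exact (integral_indicator ht).symm
  · exact (integral_indicator ⟨ht₀, (lt_add_one t₀).le⟩).symm

def convTriangle (t : ℝ) : Set (ℝ × ℝ) := {p | 0 < p.2 ∧ p.2 ≤ p.1 ∧ p.1 ≤ t}

theorem measurableSet_convTriangle (t : ℝ) : MeasurableSet (convTriangle t) :=
  (measurableSet_lt measurable_const measurable_snd).inter
    ((measurableSet_le measurable_snd measurable_fst).inter
      (measurableSet_le measurable_fst measurable_const))

theorem intervalIntegral_intervalIntegral_eq_integral_convTriangle {F : ℝ × ℝ → ℝ} {t : ℝ}
    (ht : 0 ≤ t) (hF : Integrable ((convTriangle t).indicator F)) :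
    ∫ s in (0 : ℝ)..t, ∫ u in (0 : ℝ)..s, F (s, u) = ∫ p, (convTriangle t).indicator F p := by
  rw [Measure.volume_eq_prod] at hF ⊢
  rw [integral_prod _ hF, integral_of_le ht,
    ← MeasureTheory.integral_indicator measurableSet_Ioc]
  refine integral_congr_ae (ae_of_all _ fun s => ?_)
  by_cases hs : s ∈ Ioc 0 t
  · rw [indicator_of_mem hs, integral_of_le hs.1.le,
      ← MeasureTheory.integral_indicator measurableSet_Ioc]
    congr 1 with u
    simp only [indicator, convTriangle, mem_ofPred_eq, mem_Ioc, hs.2, and_true]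
  · rw [indicator_of_notMem hs]
    refine (integral_eq_zero_of_ae (ae_of_all _ fun u => indicator_of_notMem ?_ _)).symm
    exact fun hu => hs ⟨hu.1.trans_le hu.2.1, hu.2.2⟩

-- This reflection maps `convTriangle t` onto itself and exchanges the factors `f (t - s)` and
-- `g (s - u)` of the integrand of `causalConv f (causalConv g h) t`.
theorem measurePreserving_convTriangle_reflect (t : ℝ) :
    MeasurePreserving (fun p : ℝ × ℝ => (t + p.2 - p.1, p.2)) volume volume := by
  have hshear : MeasurePreserving (fun q : ℝ × ℝ => (q.1, t + q.1 - q.2))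
      (volume.prod volume) (volume.prod volume) :=
    (MeasurePreserving.id volume).skew_product (g := fun u s => t + u - s) (by fun_prop)
      (ae_of_all _ fun u => (volume.measurePreserving_sub_left (t + u)).map_eq)
  exact Measure.measurePreserving_swap.comp (hshear.comp Measure.measurePreserving_swap)

theorem mem_convTriangle_reflect {t : ℝ} {p : ℝ × ℝ} :
    (t + p.2 - p.1, p.2) ∈ convTriangle t ↔ p ∈ convTriangle t := by
  simp only [convTriangle, mem_ofPred_eq]
  constructor <;> rintro ⟨h1, h2, h3⟩ <;> refine ⟨h1, ?_, ?_⟩ <;> linarith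

theorem integrable_convTriangle_indicator {f g h : ℝ → ℝ} {t : ℝ}
    (hf : IntervalIntegrable f volume 0 t) (hg : Continuous g)
    (hh : IntervalIntegrable h volume 0 t) :
    Integrable ((convTriangle t).indicator fun p => f (t - p.1) * (g (p.1 - p.2) * h p.2)) := by
  obtain ⟨C, hC⟩ :=
    (isCompact_Icc (a := 0) (b := t)).exists_bound_of_continuousOn hg.continuousOn
  have hf' : IntervalIntegrable (fun s => f (t - s)) volume 0 t := by
    simpa using (hf.comp_sub_left t).symm
  have hprod : Integrable fun p : ℝ × ℝ =>
      (Ioc 0 t).indicator (fun s => f (t - s)) p.1 * (Ioc 0 t).indicator h p.2 := by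
    rw [Measure.volume_eq_prod]
    exact ((integrable_indicator_iff measurableSet_Ioc).2 hf'.1).mul_prod
      ((integrable_indicator_iff measurableSet_Ioc).2 hh.1)
  have hgT : AEStronglyMeasurable ((convTriangle t).indicator fun p => g (p.1 - p.2)) :=
    ((hg.comp (continuous_fst.sub continuous_snd)).measurable.indicator
      (measurableSet_convTriangle t)).aestronglyMeasurable
  refine (hprod.bdd_mul hgT (c := max C 0) (ae_of_all _ fun p => ?_)).congr
    (ae_of_all _ fun p => ?_)
  · by_cases hp : p ∈ convTriangle t
    · rw [indicator_of_mem hp]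
      exact (hC _ ⟨sub_nonneg.2 hp.2.1, by linarith [hp.1, hp.2.2]⟩).trans (le_max_left _ _)
    · rw [indicator_of_notMem hp, norm_zero]
      exact le_max_right _ _
  · by_cases hp : p ∈ convTriangle t
    · have h1 : p.1 ∈ Ioc 0 t := ⟨hp.1.trans_le hp.2.1, hp.2.2⟩
      have h2 : p.2 ∈ Ioc 0 t := ⟨hp.1, hp.2.1.trans hp.2.2⟩
      simp only [indicator_of_mem hp, indicator_of_mem h1, indicator_of_mem h2]
      ring
    · simp only [indicator_of_notMem hp, zero_mul]

theorem causalConv_causalConv_comm {f g h : ℝ → ℝ} {t : ℝ} (ht : 0 ≤ t)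
    (hf : IntervalIntegrable f volume 0 t) (hg : Continuous g)
    (hh : IntervalIntegrable h volume 0 t) :
    causalConv f (causalConv g h) t = causalConv g (causalConv f h) t := by
  set T := convTriangle t
  set F₁ : ℝ × ℝ → ℝ := fun p => f (t - p.1) * (g (p.1 - p.2) * h p.2)
  set F₂ : ℝ × ℝ → ℝ := fun p => g (t - p.1) * (f (p.1 - p.2) * h p.2)
  have hσ := measurePreserving_convTriangle_reflect t
  have hF₁ : Integrable (T.indicator F₁) := integrable_convTriangle_indicator hf hg hh
  have hreflect :
      (T.indicator F₁) ∘ (fun p : ℝ × ℝ => (t + p.2 - p.1, p.2)) = T.indicator F₂ := by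
    ext p
    rw [Function.comp_apply]
    by_cases hp : p ∈ T
    · rw [indicator_of_mem (mem_convTriangle_reflect.2 hp), indicator_of_mem hp]
      simp only [F₁, F₂]
      ring_nf
    · rw [indicator_of_notMem (mt mem_convTriangle_reflect.1 hp), indicator_of_notMem hp]
  have hF₂ : Integrable (T.indicator F₂) := by
    rwa [← hreflect, hσ.integrable_comp hF₁.aestronglyMeasurable]
  have hiter (φ ψ : ℝ → ℝ) : causalConv φ (causalConv ψ h) t =
      ∫ s in (0 : ℝ)..t, ∫ u in (0 : ℝ)..s, φ (t - s) * (ψ (s - u) * h u) := by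
    simp only [causalConv, ← intervalIntegral.integral_const_mul]
  calc causalConv f (causalConv g h) t = ∫ p, T.indicator F₁ p :=
        (hiter f g).trans (intervalIntegral_intervalIntegral_eq_integral_convTriangle ht hF₁)
    _ = ∫ p, T.indicator F₁ p ∂(volume.map fun p : ℝ × ℝ => (t + p.2 - p.1, p.2)) := by
        rw [hσ.map_eq]
    _ = ∫ p, T.indicator F₂ p := by
        rw [integral_map hσ.aemeasurable (by rw [hσ.map_eq]; exact hF₁.1), ← hreflect]
        rfl
    _ = causalConv g (causalConv f h) t :=
        ((hiter g f).trans
          (intervalIntegral_intervalIntegral_eq_integral_convTriangle ht hF₂)).symm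

noncomputable def mittagLefflerKernel (γ ρ lam s : ℝ) : ℝ :=
  s ^ (ρ - 1) * mittagLeffler2 γ ρ (lam * s ^ γ)

section MittagLefflerKernel

variable {γ ρ lam : ℝ}

theorem hasSum_mittagLefflerKernel (hγ0 : 0 < γ) (hγ1 : γ < 1) (hρ : 0 < ρ) {s : ℝ}
    (hs : 0 < s) :
    HasSum (fun n : ℕ => lam ^ n / Real.Gamma (γ * n + ρ) * s ^ (γ * n + ρ - 1))
      (mittagLefflerKernel γ ρ lam s) := by
  refine ((summable_mittagLeffler2 hγ0 hγ1 hρ (lam * s ^ γ)).hasSum.mul_left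
    (s ^ (ρ - 1))).congr_fun fun n => ?_
  rw [mul_pow, ← Real.rpow_natCast (s ^ γ), ← Real.rpow_mul hs.le,
    show γ * n + ρ - 1 = γ * n + (ρ - 1) by ring, Real.rpow_add hs]
  ring

theorem mittagLefflerKernel_eq_add (hγ0 : 0 < γ) (hγ1 : γ < 1) (hρ : 0 < ρ) {s : ℝ}
    (hs : 0 < s) :
    mittagLefflerKernel γ ρ lam s =
      (Real.Gamma ρ)⁻¹ * s ^ (ρ - 1) + lam * mittagLefflerKernel γ (ρ + γ) lam s := by
  rw [mittagLefflerKernel, mittagLefflerKernel, mittagLeffler2_eq_inv_Gamma_add hγ0 hγ1 hρ,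
    show ρ + γ - 1 = ρ - 1 + γ by ring, Real.rpow_add hs]
  ring

theorem continuous_mittagLeffler2_mul_rpow (hγ0 : 0 < γ) (hγ1 : γ < 1) (hρ : 0 < ρ) :
    Continuous fun s => mittagLeffler2 γ ρ (lam * s ^ γ) :=
  (continuous_mittagLeffler2 hγ0 hγ1 hρ).comp
    (continuous_const.mul (Real.continuous_rpow_const hγ0.le))

theorem intervalIntegrable_mittagLefflerKernel (hγ0 : 0 < γ) (hγ1 : γ < 1) (hρ : 0 < ρ)
    (a b : ℝ) :
    IntervalIntegrable (mittagLefflerKernel γ ρ lam) volume a b :=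
  (intervalIntegral.intervalIntegrable_rpow' (by linarith)).mul_continuousOn
    (continuous_mittagLeffler2_mul_rpow hγ0 hγ1 hρ).continuousOn

end MittagLefflerKernel

theorem mittagLefflerKernel_one (γ lam s : ℝ) :
    mittagLefflerKernel γ 1 lam s = mittagLeffler γ (lam * s ^ γ) := by
  rw [mittagLefflerKernel, sub_self, Real.rpow_zero, one_mul]
  rfl

theorem continuous_mittagLefflerKernel_one {γ lam : ℝ} (hγ0 : 0 < γ) (hγ1 : γ < 1) :
    Continuous (mittagLefflerKernel γ 1 lam) := by
  rw [funext (mittagLefflerKernel_one γ lam)]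
  exact continuous_mittagLeffler2_mul_rpow hγ0 hγ1 one_pos

theorem causalConv_rpow_mittagLefflerKernel {γ c lam t : ℝ} (hγ0 : 0 < γ) (hγ1 : γ < 1)
    (hc : 0 < c) (ht : 0 < t) :
    causalConv (fun x => x ^ (γ - 1)) (mittagLefflerKernel γ c lam) t =
      Real.Gamma γ * mittagLefflerKernel γ (c + γ) lam t := by
  set F : ℝ → ℕ → ℝ → ℝ := fun l n s =>
    l ^ n / Real.Gamma (γ * n + c) * ((t - s) ^ (γ - 1) * s ^ (γ * n + c - 1))
  have hexp (n : ℕ) : 0 < γ * n + c := by positivity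
  have hterm (l : ℝ) (n : ℕ) : ∫ s in Ioc 0 t, F l n s =
      Real.Gamma γ * (l ^ n / Real.Gamma (γ * n + (c + γ)) * t ^ (γ * n + (c + γ) - 1)) := by
    have hbeta := causalConv_rpow_rpow hγ0 (hexp n) ht
    rw [causalConv, integral_of_le ht.le] at hbeta
    simp only [F]
    rw [MeasureTheory.integral_const_mul, hbeta, show γ * n + (c + γ) = γ + (γ * n + c) by ring]
    field_simp [(Real.Gamma_pos_of_pos (hexp n)).ne']
  have hnorm (n : ℕ) : ∫ s in Ioc 0 t, ‖F lam n s‖ = ∫ s in Ioc 0 t, F |lam| n s := by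
    refine setIntegral_congr_fun measurableSet_Ioc fun s hs => ?_
    simp only [F, norm_mul, norm_div, norm_pow, Real.norm_eq_abs,
      abs_of_pos (Real.Gamma_pos_of_pos (hexp n)), abs_of_nonneg (Real.rpow_nonneg hs.1.le _),
      abs_of_nonneg (Real.rpow_nonneg (sub_nonneg.2 hs.2) _)]
  have hinteg (n : ℕ) : Integrable (F lam n) (volume.restrict (Ioc 0 t)) :=
    ((intervalIntegrable_rpow_mul_rpow_sub (a := γ * n + c - 1) (b := γ - 1)
      (by linarith [hexp n]) (by linarith) ht).1.const_mul (lam ^ n / Real.Gamma (γ * n + c))).congr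
      (ae_of_all _ fun s => by simp only [F]; ring)
  have hsum := hasSum_integral_of_summable_integral_norm hinteg (by
    simp_rw [hnorm, hterm]
    exact ((hasSum_mittagLefflerKernel hγ0 hγ1 (by linarith) ht).mul_left _).summable)
  simp_rw [hterm] at hsum
  refine Eq.trans ?_ (hsum.unique
    ((hasSum_mittagLefflerKernel hγ0 hγ1 (by linarith) ht).mul_left (Real.Gamma γ)))
  rw [causalConv, integral_of_le ht.le]
  refine setIntegral_congr_fun measurableSet_Ioc fun s hs => ?_
  rw [← ((hasSum_mittagLefflerKernel hγ0 hγ1 hc hs.1).mul_left ((t - s) ^ (γ - 1))).tsum_eq]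
  exact tsum_congr fun n => by simp only [F]; ring

theorem causalConv_rpow_causalConv_mittagLefflerKernel {γ lam t : ℝ} (hγ0 : 0 < γ)
    (hγ1 : γ < 1) {B : ℝ → ℝ} (hB : Continuous B) (ht : 0 < t) :
    lam * causalConv (fun x => x ^ (γ - 1)) (causalConv B (mittagLefflerKernel γ γ lam)) t +
        causalConv (fun x => x ^ (γ - 1)) B t =
      Real.Gamma γ * causalConv B (mittagLefflerKernel γ γ lam) t := by
  have hk : IntervalIntegrable (fun x => x ^ (γ - 1)) volume 0 t :=
    intervalIntegral.intervalIntegrable_rpow' (by linarith)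
  have hBt : ContinuousOn (fun s => B (t - s)) (uIcc 0 t) := by fun_prop
  calc lam * causalConv (fun x => x ^ (γ - 1)) (causalConv B (mittagLefflerKernel γ γ lam)) t +
        causalConv (fun x => x ^ (γ - 1)) B t
      = lam * causalConv B (fun s => Real.Gamma γ * mittagLefflerKernel γ (γ + γ) lam s) t +
          causalConv B (fun x => x ^ (γ - 1)) t := by
        rw [causalConv_causalConv_comm ht.le hk hB
            (intervalIntegrable_mittagLefflerKernel hγ0 hγ1 hγ0 0 t),
          causalConv_congr ht.le fun s hs =>
            causalConv_rpow_mittagLefflerKernel hγ0 hγ1 hγ0 hs.1, causalConv_comm _ B]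
    _ = Real.Gamma γ * causalConv B (fun s => (Real.Gamma γ)⁻¹ * s ^ (γ - 1) +
          lam * mittagLefflerKernel γ (γ + γ) lam s) t := by
        rw [causalConv_add ((hk.const_mul _).continuousOn_mul hBt)
            (((intervalIntegrable_mittagLefflerKernel hγ0 hγ1 (by linarith) 0 t).const_mul
              _).continuousOn_mul hBt),
          causalConv_const_mul, causalConv_const_mul, causalConv_const_mul]
        field_simp [(Real.Gamma_pos_of_pos hγ0).ne']
        ring
    _ = Real.Gamma γ * causalConv B (mittagLefflerKernel γ γ lam) t := by
        rw [causalConv_congr ht.le fun s hs =>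
          (mittagLefflerKernel_eq_add hγ0 hγ1 hγ0 hs.1).symm]

theorem volterra_of_eq_mittagLefflerKernel {γ lam v₀ t : ℝ} (hγ0 : 0 < γ) (hγ1 : γ < 1)
    {B u : ℝ → ℝ} (hB : Continuous B) (ht : 0 < t)
    (hu : ∀ s ∈ Icc 0 t, u s = v₀ * mittagLefflerKernel γ 1 lam s +
      causalConv B (mittagLefflerKernel γ γ lam) s) :
    u t = v₀ + 1 / Real.Gamma γ *
      causalConv (fun x => x ^ (γ - 1)) (fun s => lam * u s + B s) t := by
  set w := causalConv B (mittagLefflerKernel γ γ lam)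
  have hk : IntervalIntegrable (fun s => (t - s) ^ (γ - 1)) volume 0 t := by
    simpa using ((intervalIntegral.intervalIntegrable_rpow' (by linarith : -1 < γ - 1)
      (a := 0) (b := t)).comp_sub_left t).symm
  have hw : ContinuousOn w (uIcc 0 t) :=
    (continuousOn_causalConv hB (intervalIntegrable_mittagLefflerKernel hγ0 hγ1 hγ0 0)).mono
      (by rw [uIcc_of_le ht.le]; exact Icc_subset_Ici_self)
  have hsplit : causalConv (fun x => x ^ (γ - 1)) (fun s => lam * u s + B s) t =
      lam * v₀ * causalConv (fun x => x ^ (γ - 1)) (mittagLefflerKernel γ 1 lam) t +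
        (lam * causalConv (fun x => x ^ (γ - 1)) w t +
          causalConv (fun x => x ^ (γ - 1)) B t) := by
    rw [causalConv_congr ht.le fun s hs => show lam * u s + B s =
        lam * v₀ * mittagLefflerKernel γ 1 lam s + (lam * w s + B s) by
      rw [hu s (Ioc_subset_Icc_self hs)]; ring,
      causalConv_add (hk.mul_continuousOn
        ((continuous_mittagLefflerKernel_one hγ0 hγ1).continuousOn.const_smul (lam * v₀)))
        (hk.mul_continuousOn ((hw.const_smul lam).add hB.continuousOn)),
      causalConv_const_mul, causalConv_add (hk.mul_continuousOn (hw.const_smul lam))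
        (hk.mul_continuousOn hB.continuousOn), causalConv_const_mul]
  rw [hsplit, causalConv_rpow_causalConv_mittagLefflerKernel hγ0 hγ1 hB ht,
    causalConv_rpow_mittagLefflerKernel hγ0 hγ1 one_pos ht, hu t ⟨ht.le, le_rfl⟩,
    mittagLefflerKernel_eq_add hγ0 hγ1 one_pos ht, Real.Gamma_one, sub_self, Real.rpow_zero]
  field_simp [(Real.Gamma_pos_of_pos hγ0).ne']
  ring

theorem linear_fode_mittagLeffler_solution_general
    (γ : ℝ) (hγ0 : 0 < γ) (hγ1 : γ < 1) (lam : ℝ)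
    (v₀ : ℝ) (b : ℝ → ℝ) (hb : ContinuousOn b (Ici 0))
    (v : ℝ → ℝ)
    (hv : ∀ t : ℝ, v t = v₀ * mittagLeffler γ (lam * t ^ γ) +
        ∫ s in (0:ℝ)..t, b (t - s) * s ^ (γ - 1) * mittagLeffler2 γ γ (lam * s ^ γ)) :
    ContinuousOn v (Ici 0) ∧ v 0 = v₀ ∧
    ∀ t : ℝ, 0 ≤ t →
      v t = v₀ + (1 / Real.Gamma γ) *
        ∫ s in (0:ℝ)..t, (t - s) ^ (γ - 1) * (lam * v s + b s) := by
  set B : ℝ → ℝ := fun x => b (max x 0)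
  have hB : Continuous B := hb.comp_continuous (by fun_prop) fun x => le_max_right x 0
  have hBb (x : ℝ) (hx : 0 ≤ x) : B x = b x := by simp only [B, max_eq_left hx]
  have hvB (t : ℝ) (ht : 0 ≤ t) : v t = v₀ * mittagLefflerKernel γ 1 lam t +
      causalConv B (mittagLefflerKernel γ γ lam) t := by
    rw [hv, mittagLefflerKernel_one, causalConv]
    congr 1
    refine integral_congr fun s hs => ?_
    rw [uIcc_of_le ht] at hs
    rw [hBb _ (sub_nonneg.2 hs.2), mittagLefflerKernel, mul_assoc]
  have hv0 : v 0 = v₀ := by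
    rw [hvB 0 le_rfl, mittagLefflerKernel_one, Real.zero_rpow hγ0.ne', mul_zero, mittagLeffler,
      ← mittagLeffler2, mittagLeffler2_zero, Real.Gamma_one, causalConv, integral_same]
    ring
  refine ⟨?_, hv0, fun t ht => ?_⟩
  · refine ContinuousOn.congr ?_ hvB
    exact ((continuous_mittagLefflerKernel_one hγ0 hγ1).continuousOn.const_smul v₀).add
      (continuousOn_causalConv hB (intervalIntegrable_mittagLefflerKernel hγ0 hγ1 hγ0 0))
  rcases ht.eq_or_lt with rfl | ht
  · rw [hv0, integral_same, mul_zero, add_zero]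
  rw [volterra_of_eq_mittagLefflerKernel hγ0 hγ1 hB ht fun s hs => hvB s hs.1,
    causalConv_congr ht.le fun s hs => show lam * v s + B s = lam * v s + b s by
      rw [hBb s hs.1.le]]
  rfl

/-- Solution formula for the linear fractional ODE `D_c^γ v = λ v + b(t)`, `v(0) = v₀`:
the function `v(t) = v₀ E_γ(λ t^γ) + ∫_0^t b(t−s) s^{γ−1} E_{γ,γ}(λ s^γ) ds` is continuous
on `[0,∞)`, satisfies `v(0) = v₀`, and solves the associated Volterra integral equation
`v(t) = v₀ + (1/Γ(γ)) ∫_0^t (t−s)^{γ−1} (λ v(s) + b(s)) ds` for all `t ≥ 0`. -/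
theorem linear_fode_mittagLeffler_solution
    (γ : ℝ) (hγ0 : 0 < γ) (hγ1 : γ < 1) (lam : ℝ) (hlam : lam ≠ 0)
    (v₀ : ℝ) (b : ℝ → ℝ) (hb : ContinuousOn b (Ici 0))
    (v : ℝ → ℝ)
    (hv : ∀ t : ℝ, v t = v₀ * mittagLeffler γ (lam * t ^ γ) +
        ∫ s in (0:ℝ)..t, b (t - s) * s ^ (γ - 1) * mittagLeffler2 γ γ (lam * s ^ γ)) :
    ContinuousOn v (Ici 0) ∧ v 0 = v₀ ∧
    ∀ t : ℝ, 0 ≤ t →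
      v t = v₀ + (1 / Real.Gamma γ) *
        ∫ s in (0:ℝ)..t, (t - s) ^ (γ - 1) * (lam * v s + b s) :=
  linear_fode_mittagLeffler_solution_general γ hγ0 hγ1 lam v₀ b hb v hv
end

section
/- (Local existence and uniqueness for fractional ODEs.) Let 0 < γ < 1, v₀ ∈ ℝ, T > 0, A > 0, and let f be continuous on D = [0, T] × [v₀ − A, v₀ + A] with sup_{0≤t≤T} |f(t, v₁) − f(t, v₂)| ≤ L |v₁ − v₂| for all v₁, v₂ ∈ [v₀ − A, v₀ + A], for some L > 0. Set M = sup_{(t,v) ∈ D} |f(t, v)| and T₁ = min{ T, sup{ t ≥ 0 : (M/Γ(1+γ)) t^γ E_γ(L t^γ) ≤ A } }. Then T₁ > 0 and there exists a unique continuous function v : [0, T₁] → [v₀ − A, v₀ + A] satisfying v(t) = v₀ + (1/Γ(γ)) ∫_0^t (t−s)^{γ−1} f(s, v(s)) ds for all t ∈ [0, T₁]. -/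
open MeasureTheory Set
open scoped ENNReal Classical

/-!
The solution is the fixed point of the Picard operator `P v = v₀ + I^γ [f(·, v)]` on the complete
space of continuous curves `[0, T₁] → [v₀ - A, v₀ + A]`, where `I^γ` is the Riemann–Liouville
integral. Since `E_γ ≥ 1`, the choice of `T₁` gives `M t^γ / Γ(1 + γ) ≤ A` on `[0, T₁]`, which is
exactly what makes `P` map this space into itself. `P` need not be a contraction, but the Beta
integral `I^γ [s^β] = Γ(β + 1) / Γ(β + γ + 1) · t^(β + γ)` and induction give
`‖Pⁿ u - Pⁿ w‖ ≤ (L T₁^γ)ⁿ / Γ(γ n + 1) · ‖u - w‖`. These are the terms of the convergent series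
of `E_γ(L T₁^γ)`, so some iterate of `P` is a contraction, and Banach's fixed point theorem gives
existence and uniqueness.
-/

open Filter Topology Function
open scoped Nat

namespace FractionalODE

lemma factorial_floor_le_Gamma {y : ℝ} (hy : 1 ≤ y) : (⌊y⌋₊ ! : ℝ) ≤ Real.Gamma (y + 1) := by
  have hfloor : (1 : ℝ) ≤ ⌊y⌋₊ := by exact_mod_cast Nat.one_le_floor_iff _ |>.mpr hy
  rw [← Real.Gamma_nat_eq_factorial]
  exact Real.Gamma_strictMonoOn_Ici.monotoneOn (by rw [mem_Ici]; linarith)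
    (by rw [mem_Ici]; linarith) (by linarith [Nat.floor_le (zero_le_one.trans hy)])

lemma tendsto_pow_div_Gamma_mul_add_one {γ : ℝ} (hγ : 0 < γ) (x : ℝ) :
    Tendsto (fun n : ℕ => x ^ n / Real.Gamma (γ * n + 1)) atTop (𝓝 0) := by
  set ρ := max 1 |x| ^ γ⁻¹
  have hρ : 1 ≤ ρ := Real.one_le_rpow (le_max_left _ _) (inv_nonneg.mpr hγ.le)
  have hk : Tendsto (fun n : ℕ => ⌊γ * n⌋₊) atTop atTop :=
    tendsto_nat_floor_atTop.comp (tendsto_natCast_atTop_atTop.const_mul_atTop hγ)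
  have hlim := ((FloorSemiring.tendsto_pow_div_factorial_atTop ρ).comp hk).const_mul ρ
  rw [mul_zero] at hlim
  refine squeeze_zero_norm' ?_ hlim
  filter_upwards [hk.eventually_ge_atTop 1] with n hn
  set k := ⌊γ * n⌋₊
  have hγn : 1 ≤ γ * n := (Nat.one_le_floor_iff _).mp hn
  have hpow : |x| ^ n ≤ ρ * ρ ^ k :=
    calc |x| ^ n ≤ max 1 |x| ^ n := pow_le_pow_left₀ (abs_nonneg x) (le_max_right _ _) n
      _ = ρ ^ (γ * n) := by
        rw [Real.rpow_mul (by positivity), Real.rpow_inv_rpow (by positivity) hγ.ne',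
          Real.rpow_natCast]
      _ ≤ ρ ^ ((k : ℝ) + 1) :=
        Real.rpow_le_rpow_of_exponent_le hρ (Nat.lt_floor_add_one _).le
      _ = ρ * ρ ^ k := by rw [Real.rpow_add_one (by positivity), Real.rpow_natCast, mul_comm]
  rw [norm_div, norm_pow, Real.norm_eq_abs, Real.norm_of_nonneg (by positivity)]
  simp only [comp_apply, mul_div_assoc']
  exact div_le_div₀ (by positivity) hpow (by positivity) (factorial_floor_le_Gamma hγn)

lemma summable_pow_div_Gamma_mul_add_one {γ : ℝ} (hγ : 0 < γ) (x : ℝ) :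
    Summable (fun n : ℕ => x ^ n / Real.Gamma (γ * n + 1)) := by
  refine .of_norm_bounded_eventually_nat summable_geometric_two ?_
  filter_upwards [(tendsto_pow_div_Gamma_mul_add_one hγ (2 * x)).norm.eventually
    (ge_mem_nhds (by norm_num : ‖(0 : ℝ)‖ < 1))] with n hn
  have h2 : (0 : ℝ) < 2 ^ n := by positivity
  calc ‖x ^ n / Real.Gamma (γ * n + 1)‖ = ‖(2 * x) ^ n / Real.Gamma (γ * n + 1)‖ / 2 ^ n := by
        rw [mul_pow, mul_div_assoc, norm_mul, norm_pow, Real.norm_two,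
          mul_div_cancel_left₀ _ h2.ne']
    _ ≤ (1 / 2) ^ n := by rw [div_pow, one_pow]; gcongr

lemma one_le_mittagLeffler {γ z : ℝ} (hγ : 0 < γ) (hz : 0 ≤ z) : 1 ≤ mittagLeffler γ z := by
  simpa [mittagLeffler] using
    (summable_pow_div_Gamma_mul_add_one hγ z).le_tsum 0 fun n _ => by positivity

lemma mittagLeffler_le_mittagLeffler {γ z w : ℝ} (hγ : 0 < γ) (hz : 0 ≤ z) (hzw : z ≤ w) :
    mittagLeffler γ z ≤ mittagLeffler γ w :=
  (summable_pow_div_Gamma_mul_add_one hγ z).tsum_le_tsum (fun n => by gcongr)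
    (summable_pow_div_Gamma_mul_add_one hγ w)

lemma continuousOn_of_dist_le_mul_rpow {X Y : Type*} [PseudoMetricSpace X] [PseudoMetricSpace Y]
    {F : X → Y} {s : Set X} {K r : ℝ} (hr : 0 < r)
    (h : ∀ x ∈ s, ∀ y ∈ s, dist (F x) (F y) ≤ K * dist x y ^ r) : ContinuousOn F s := by
  intro x hx
  rw [ContinuousWithinAt, tendsto_iff_dist_tendsto_zero]
  have hlim : Tendsto (fun y => K * dist y x ^ r) (𝓝[s] x) (𝓝 0) := by
    have : Continuous fun y => K * dist y x ^ r :=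
      continuous_const.mul
        ((continuous_id.dist continuous_const).rpow_const fun _ => Or.inr hr.le)
    simpa [Real.zero_rpow hr.ne'] using (this.tendsto x).mono_left nhdsWithin_le_nhds
  exact squeeze_zero' (Eventually.of_forall fun _ => dist_nonneg)
    (eventually_nhdsWithin_of_forall fun y hy => h y hy x hx) hlim

/-- The Riemann–Liouville fractional integral `I^γ g (t)`. -/
noncomputable def fracIntegral (γ : ℝ) (g : ℝ → ℝ) (t : ℝ) : ℝ :=
  1 / Real.Gamma γ * ∫ s in (0 : ℝ)..t, (t - s) ^ (γ - 1) * g s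

section fracIntegral

variable {γ : ℝ} {g : ℝ → ℝ}

lemma intervalIntegrable_rpow_sub (hγ : 0 < γ) (a b t : ℝ) :
    IntervalIntegrable (fun s => (t - s) ^ (γ - 1)) volume a b := by
  simpa using ((intervalIntegral.intervalIntegrable_rpow' (r := γ - 1)
    (by linarith)).comp_sub_left t (a := t - b) (b := t - a)).symm

lemma intervalIntegrable_rpow_sub_mul (hγ : 0 < γ) {a b : ℝ} (t : ℝ)
    (hg : ContinuousOn g (uIcc a b)) :
    IntervalIntegrable (fun s => (t - s) ^ (γ - 1) * g s) volume a b :=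
  (intervalIntegrable_rpow_sub hγ a b t).mul_continuousOn hg

lemma integral_rpow_sub (hγ : 0 < γ) (a b t : ℝ) :
    ∫ s in a..b, (t - s) ^ (γ - 1) = ((t - a) ^ γ - (t - b) ^ γ) / γ := by
  rw [intervalIntegral.integral_comp_sub_left (fun x : ℝ => x ^ (γ - 1)),
    integral_rpow (Or.inl (by linarith))]
  ring_nf

lemma abs_integral_rpow_sub_mul_le (hγ : 0 < γ) {a b C : ℝ} (hab : a ≤ b)
    (hg : ∀ s ∈ Ioc a b, |g s| ≤ C) :
    |∫ s in a..b, (b - s) ^ (γ - 1) * g s| ≤ C * (b - a) ^ γ / γ := by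
  calc |∫ s in a..b, (b - s) ^ (γ - 1) * g s| ≤ ∫ s in a..b, C * (b - s) ^ (γ - 1) := by
        rw [← Real.norm_eq_abs]
        refine intervalIntegral.norm_integral_le_of_norm_le hab (ae_of_all _ fun s hs => ?_)
          ((intervalIntegrable_rpow_sub hγ a b b).const_mul C)
        rw [norm_mul, Real.norm_of_nonneg (Real.rpow_nonneg (by linarith [hs.2]) _), mul_comm]
        exact mul_le_mul_of_nonneg_right (hg s hs) (Real.rpow_nonneg (by linarith [hs.2]) _)
    _ = C * (b - a) ^ γ / γ := by
        rw [intervalIntegral.integral_const_mul, integral_rpow_sub hγ, sub_self,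
          Real.zero_rpow hγ.ne', sub_zero, mul_div_assoc]

lemma abs_integral_rpow_sub_sub_rpow_sub_mul_le (hγ0 : 0 < γ) (hγ1 : γ ≤ 1) {t t' C : ℝ}
    (hC : 0 ≤ C) (ht : 0 ≤ t) (htt' : t ≤ t') (hg : ∀ s ∈ Ioc 0 t, |g s| ≤ C) :
    |∫ s in (0 : ℝ)..t, ((t' - s) ^ (γ - 1) - (t - s) ^ (γ - 1)) * g s|
      ≤ C * (t' - t) ^ γ / γ := by
  -- `s = t` is excluded because there the junk value `0 ^ (γ - 1) = 0` reverses the kernel order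
  have hae : ∀ᵐ s ∂volume, s ≠ t := ae_iff.2 (by simp)
  calc |∫ s in (0 : ℝ)..t, ((t' - s) ^ (γ - 1) - (t - s) ^ (γ - 1)) * g s|
      ≤ ∫ s in (0 : ℝ)..t, C * ((t - s) ^ (γ - 1) - (t' - s) ^ (γ - 1)) := by
        rw [← Real.norm_eq_abs]
        refine intervalIntegral.norm_integral_le_of_norm_le ht ?_
          (((intervalIntegrable_rpow_sub hγ0 0 t t).sub
            (intervalIntegrable_rpow_sub hγ0 0 t t')).const_mul C)
        filter_upwards [hae] with s hst hs
        have hker : (t' - s) ^ (γ - 1) ≤ (t - s) ^ (γ - 1) :=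
          Real.rpow_le_rpow_of_nonpos (sub_pos.2 (lt_of_le_of_ne hs.2 hst)) (by linarith)
            (by linarith)
        rw [norm_mul, Real.norm_eq_abs, abs_of_nonpos (by linarith), mul_comm, neg_sub]
        exact mul_le_mul_of_nonneg_right (hg s hs) (by linarith)
    _ ≤ C * (t' - t) ^ γ / γ := by
        rw [intervalIntegral.integral_const_mul, intervalIntegral.integral_sub
          (intervalIntegrable_rpow_sub hγ0 0 t t) (intervalIntegrable_rpow_sub hγ0 0 t t'),
          integral_rpow_sub hγ0, integral_rpow_sub hγ0, sub_self, Real.zero_rpow hγ0.ne',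
          mul_div_assoc]
        have : t ^ γ ≤ t' ^ γ := by gcongr
        gcongr
        simp only [sub_zero]
        rw [← sub_div]
        gcongr
        linarith

lemma abs_fracIntegral_sub_le (hγ0 : 0 < γ) (hγ1 : γ ≤ 1) {t t' C : ℝ} (hC : 0 ≤ C)
    (ht : 0 ≤ t) (htt' : t ≤ t') (hg : ContinuousOn g (Icc 0 t'))
    (hgC : ∀ s ∈ Icc 0 t', |g s| ≤ C) :
    |fracIntegral γ g t' - fracIntegral γ g t|
      ≤ 2 * C / Real.Gamma (γ + 1) * (t' - t) ^ γ := by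
  have hint : ∀ {a b} (u : ℝ), a ∈ Icc 0 t' → b ∈ Icc 0 t' →
      IntervalIntegrable (fun s => (u - s) ^ (γ - 1) * g s) volume a b := fun u ha hb =>
    intervalIntegrable_rpow_sub_mul hγ0 u (hg.mono (uIcc_subset_Icc ha hb))
  have h0 : (0 : ℝ) ∈ Icc 0 t' := ⟨le_rfl, ht.trans htt'⟩
  have hsplit : (∫ s in (0 : ℝ)..t', (t' - s) ^ (γ - 1) * g s)
        - ∫ s in (0 : ℝ)..t, (t - s) ^ (γ - 1) * g s
      = (∫ s in (0 : ℝ)..t, ((t' - s) ^ (γ - 1) - (t - s) ^ (γ - 1)) * g s)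
        + ∫ s in t..t', (t' - s) ^ (γ - 1) * g s := by
    simp_rw [sub_mul]
    rw [intervalIntegral.integral_sub (hint t' h0 ⟨ht, htt'⟩) (hint t h0 ⟨ht, htt'⟩),
      ← intervalIntegral.integral_add_adjacent_intervals (hint t' h0 ⟨ht, htt'⟩)
        (hint t' ⟨ht, htt'⟩ ⟨ht.trans htt', le_rfl⟩)]
    ring
  have hgap := abs_integral_rpow_sub_sub_rpow_sub_mul_le hγ0 hγ1 hC ht htt'
    (fun s hs => hgC s ⟨hs.1.le, hs.2.trans htt'⟩)
  have htail := abs_integral_rpow_sub_mul_le hγ0 htt' (g := g)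
    (fun s hs => hgC s ⟨ht.trans hs.1.le, hs.2⟩)
  rw [fracIntegral, fracIntegral, ← mul_sub, hsplit, abs_mul, abs_of_pos (by positivity),
    Real.Gamma_add_one hγ0.ne']
  calc _ ≤ 1 / Real.Gamma γ * (C * (t' - t) ^ γ / γ + C * (t' - t) ^ γ / γ) := by
        gcongr
        exact (abs_add_le _ _).trans (add_le_add hgap htail)
    _ = 2 * C / (γ * Real.Gamma γ) * (t' - t) ^ γ := by field_simp; ring

lemma continuousOn_fracIntegral (hγ0 : 0 < γ) (hγ1 : γ ≤ 1) {T : ℝ}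
    (hg : ContinuousOn g (Icc 0 T)) : ContinuousOn (fracIntegral γ g) (Icc 0 T) := by
  obtain ⟨C₀, hC₀⟩ := isCompact_Icc.exists_bound_of_continuousOn hg
  set C := max C₀ 0
  refine continuousOn_of_dist_le_mul_rpow hγ0 (K := 2 * C / Real.Gamma (γ + 1)) ?_
  have key : ∀ t ∈ Icc 0 T, ∀ t' ∈ Icc 0 T, t ≤ t' → dist (fracIntegral γ g t') (fracIntegral γ g t)
      ≤ 2 * C / Real.Gamma (γ + 1) * dist t' t ^ γ := by
    intro t ht t' ht' htt'
    rw [Real.dist_eq, Real.dist_eq, abs_of_nonneg (sub_nonneg.2 htt')]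
    exact abs_fracIntegral_sub_le hγ0 hγ1 (le_max_right _ _) ht.1 htt'
      (hg.mono (Icc_subset_Icc le_rfl ht'.2))
      fun s hs => (hC₀ s ⟨hs.1, hs.2.trans ht'.2⟩).trans (le_max_left _ _)
  intro x hx y hy
  rcases le_total x y with hxy | hyx
  · rw [dist_comm, dist_comm x]; exact key x hx y hy hxy
  · exact key y hy x hx hyx

lemma integral_rpow_sub_mul_rpow (hγ : 0 < γ) {β t : ℝ} (hβ : -1 < β) (ht : 0 < t) :
    ∫ s in (0 : ℝ)..t, (t - s) ^ (γ - 1) * s ^ β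
      = Real.Gamma (β + 1) * Real.Gamma γ / Real.Gamma (β + 1 + γ) * t ^ (β + γ) := by
  apply Complex.ofReal_injective
  have hbeta := Complex.betaIntegral_scaled (β + 1 : ℝ) γ ht
  rw [Complex.betaIntegral_eq_Gamma_mul_div _ _ (by simpa using (by linarith : 0 < β + 1))
    (by simpa using hγ)] at hbeta
  rw [← intervalIntegral.integral_ofReal]
  convert hbeta using 1
  · refine intervalIntegral.integral_congr fun s hs => ?_
    rw [uIcc_of_le ht.le] at hs
    push_cast
    rw [Complex.ofReal_cpow (sub_nonneg.2 hs.2), Complex.ofReal_cpow hs.1, mul_comm]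
    push_cast
    ring_nf
  · rw [← Complex.ofReal_add, Complex.Gamma_ofReal, Complex.Gamma_ofReal, Complex.Gamma_ofReal,
      Complex.ofReal_mul, Complex.ofReal_cpow ht.le]
    push_cast
    ring_nf

lemma abs_fracIntegral_le (hγ : 0 < γ) {β C t : ℝ} (hβ : 0 ≤ β) (ht : 0 ≤ t)
    (hg : ∀ s ∈ Icc 0 t, |g s| ≤ C * s ^ β) :
    |fracIntegral γ g t| ≤ C * Real.Gamma (β + 1) / Real.Gamma (β + 1 + γ) * t ^ (β + γ) := by
  rcases ht.eq_or_lt with rfl | ht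
  · simp [fracIntegral, Real.zero_rpow (by positivity : β + γ ≠ 0)]
  have hbound : |∫ s in (0 : ℝ)..t, (t - s) ^ (γ - 1) * g s|
      ≤ ∫ s in (0 : ℝ)..t, C * ((t - s) ^ (γ - 1) * s ^ β) := by
    rw [← Real.norm_eq_abs]
    refine intervalIntegral.norm_integral_le_of_norm_le ht.le (ae_of_all _ fun s hs => ?_)
      ((intervalIntegrable_rpow_sub_mul hγ t
        (Real.continuous_rpow_const hβ).continuousOn).const_mul C)
    have hk : 0 ≤ (t - s) ^ (γ - 1) := Real.rpow_nonneg (by linarith [hs.2]) _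
    rw [norm_mul, Real.norm_of_nonneg hk, Real.norm_eq_abs, mul_left_comm]
    exact mul_le_mul_of_nonneg_left (hg s ⟨hs.1.le, hs.2⟩) hk
  rw [fracIntegral, abs_mul, abs_of_pos (by positivity)]
  calc 1 / Real.Gamma γ * |∫ s in (0 : ℝ)..t, (t - s) ^ (γ - 1) * g s|
      ≤ 1 / Real.Gamma γ * ∫ s in (0 : ℝ)..t, C * ((t - s) ^ (γ - 1) * s ^ β) := by gcongr
    _ = C * Real.Gamma (β + 1) / Real.Gamma (β + 1 + γ) * t ^ (β + γ) := by
        rw [intervalIntegral.integral_const_mul, integral_rpow_sub_mul_rpow hγ (by linarith) ht]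
        field_simp

lemma fracIntegral_congr {g₁ g₂ : ℝ → ℝ} {t : ℝ} (ht : 0 ≤ t) (h : EqOn g₁ g₂ (Icc 0 t)) :
    fracIntegral γ g₁ t = fracIntegral γ g₂ t := by
  unfold fracIntegral
  congr 1
  refine intervalIntegral.integral_congr fun s hs => ?_
  rw [uIcc_of_le ht] at hs
  simp only [h hs]

lemma fracIntegral_sub (hγ : 0 < γ) {g₁ g₂ : ℝ → ℝ} {t : ℝ} (hg₁ : ContinuousOn g₁ (uIcc 0 t))
    (hg₂ : ContinuousOn g₂ (uIcc 0 t)) :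
    fracIntegral γ (fun s => g₁ s - g₂ s) t = fracIntegral γ g₁ t - fracIntegral γ g₂ t := by
  simp only [fracIntegral, ← mul_sub, ← intervalIntegral.integral_sub
    (intervalIntegrable_rpow_sub_mul hγ t hg₁) (intervalIntegrable_rpow_sub_mul hγ t hg₂)]

end fracIntegral

noncomputable def curveExtend {T a b : ℝ} (hT : 0 ≤ T) (u : C(Icc (0 : ℝ) T, Icc a b))
    (t : ℝ) : ℝ :=
  (IccExtend hT (⇑u) t : Icc a b)

section curveExtend

variable {T a b : ℝ} (hT : 0 ≤ T) (u : C(Icc (0 : ℝ) T, Icc a b))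

lemma curveExtend_of_mem {t : ℝ} (ht : t ∈ Icc 0 T) : curveExtend hT u t = u ⟨t, ht⟩ := by
  rw [curveExtend, IccExtend_of_mem]

lemma curveExtend_mem (t : ℝ) : curveExtend hT u t ∈ Icc a b := (IccExtend hT u t).2

lemma continuous_curveExtend : Continuous (curveExtend hT u) :=
  continuous_subtype_val.comp (u.continuous.comp continuous_projIcc)

end curveExtend

def IsVolterraSolution (γ : ℝ) (f : ℝ → ℝ → ℝ) (v₀ A T : ℝ) (v : ℝ → ℝ) : Prop :=
  ContinuousOn v (Icc 0 T) ∧ (∀ t ∈ Icc (0 : ℝ) T, v t ∈ Icc (v₀ - A) (v₀ + A)) ∧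
    ∀ t ∈ Icc (0 : ℝ) T, v t = v₀ + fracIntegral γ (fun s => f s (v s)) t

namespace IsVolterraSolution

variable {γ v₀ A T : ℝ} {f : ℝ → ℝ → ℝ} {v : ℝ → ℝ} (hv : IsVolterraSolution γ f v₀ A T v)

def toContinuousMap : C(Icc (0 : ℝ) T, Icc (v₀ - A) (v₀ + A)) :=
  ⟨fun t => ⟨v t, hv.2.1 t t.2⟩, hv.1.domRestrict.subtype_mk _⟩

lemma curveExtend_toContinuousMap (hT : 0 ≤ T) {t : ℝ} (ht : t ∈ Icc 0 T) :
    curveExtend hT hv.toContinuousMap t = v t := by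
  rw [curveExtend_of_mem _ _ ht]
  rfl

end IsVolterraSolution

structure IsFracPicardLindelof (γ : ℝ) (f : ℝ → ℝ → ℝ) (v₀ A L M T : ℝ) : Prop where
  pos : 0 < γ
  le_one : γ ≤ 1
  nonneg_T : 0 ≤ T
  nonneg_L : 0 ≤ L
  continuousOn : ContinuousOn (fun p : ℝ × ℝ => f p.1 p.2) (Icc 0 T ×ˢ Icc (v₀ - A) (v₀ + A))
  abs_sub_le : ∀ t ∈ Icc (0 : ℝ) T, ∀ x ∈ Icc (v₀ - A) (v₀ + A), ∀ y ∈ Icc (v₀ - A) (v₀ + A),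
    |f t x - f t y| ≤ L * |x - y|
  abs_le : ∀ t ∈ Icc (0 : ℝ) T, ∀ x ∈ Icc (v₀ - A) (v₀ + A), |f t x| ≤ M
  mul_rpow_le : ∀ t ∈ Icc (0 : ℝ) T, M / Real.Gamma (1 + γ) * t ^ γ ≤ A

namespace IsFracPicardLindelof

variable {γ v₀ A L M T : ℝ} {f : ℝ → ℝ → ℝ} (hf : IsFracPicardLindelof γ f v₀ A L M T)
include hf

lemma continuousOn_comp_curveExtend (u : C(Icc (0 : ℝ) T, Icc (v₀ - A) (v₀ + A))) :
    ContinuousOn (fun s => f s (curveExtend hf.nonneg_T u s)) (Icc 0 T) :=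
  hf.continuousOn.comp (continuousOn_id.prodMk (continuous_curveExtend _ u).continuousOn)
    fun s hs => ⟨hs, curveExtend_mem _ u s⟩

lemma add_fracIntegral_mem {v : ℝ → ℝ} (hvB : MapsTo v (Icc 0 T) (Icc (v₀ - A) (v₀ + A)))
    {t : ℝ} (ht : t ∈ Icc 0 T) :
    v₀ + fracIntegral γ (fun s => f s (v s)) t ∈ Icc (v₀ - A) (v₀ + A) := by
  have h := abs_fracIntegral_le hf.pos le_rfl ht.1 (C := M) (g := fun s => f s (v s))
    fun s hs => by
      have hsT : s ∈ Icc 0 T := ⟨hs.1, hs.2.trans ht.2⟩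
      simpa using hf.abs_le s hsT _ (hvB hsT)
  rw [zero_add, zero_add, Real.Gamma_one, mul_one] at h
  have := _root_.abs_le.mp (h.trans (hf.mul_rpow_le t ht))
  constructor <;> linarith [this.1, this.2]

noncomputable def next (u : C(Icc (0 : ℝ) T, Icc (v₀ - A) (v₀ + A))) :
    C(Icc (0 : ℝ) T, Icc (v₀ - A) (v₀ + A)) where
  toFun t := ⟨v₀ + fracIntegral γ (fun s => f s (curveExtend hf.nonneg_T u s)) t,
    hf.add_fracIntegral_mem (fun s _ => curveExtend_mem _ _ s) t.2⟩
  continuous_toFun := (continuous_const.add (continuousOn_fracIntegral hf.pos hf.le_one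
    (hf.continuousOn_comp_curveExtend u)).domRestrict).subtype_mk _

lemma curveExtend_next (u : C(Icc (0 : ℝ) T, Icc (v₀ - A) (v₀ + A))) {t : ℝ}
    (ht : t ∈ Icc 0 T) :
    curveExtend hf.nonneg_T (hf.next u) t
      = v₀ + fracIntegral γ (fun s => f s (curveExtend hf.nonneg_T u s)) t := by
  rw [curveExtend_of_mem _ _ ht]
  rfl

lemma abs_curveExtend_iterate_next_sub_le (n : ℕ)
    (u w : C(Icc (0 : ℝ) T, Icc (v₀ - A) (v₀ + A))) {t : ℝ} (ht : t ∈ Icc 0 T) :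
    |curveExtend hf.nonneg_T (hf.next^[n] u) t - curveExtend hf.nonneg_T (hf.next^[n] w) t|
      ≤ (L * t ^ γ) ^ n / Real.Gamma (γ * n + 1) * dist u w := by
  induction n generalizing t with
  | zero =>
    simpa [curveExtend_of_mem _ _ ht, ← Subtype.dist_eq, ← Real.dist_eq] using
      ContinuousMap.dist_apply_le_dist (f := u) (g := w) ⟨t, ht⟩
  | succ n ih =>
    set a := curveExtend hf.nonneg_T (hf.next^[n] u)
    set b := curveExtend hf.nonneg_T (hf.next^[n] w)
    have hcont (c : C(Icc (0 : ℝ) T, Icc (v₀ - A) (v₀ + A))) :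
        ContinuousOn (fun s => f s (curveExtend hf.nonneg_T c s)) (uIcc 0 t) :=
      (hf.continuousOn_comp_curveExtend c).mono
        (by rw [uIcc_of_le ht.1]; exact Icc_subset_Icc_right ht.2)
    have hstep : ∀ s ∈ Icc 0 t, |f s (a s) - f s (b s)|
        ≤ L ^ (n + 1) * dist u w / Real.Gamma (γ * n + 1) * s ^ (γ * n) := by
      intro s hs
      have hsT : s ∈ Icc 0 T := ⟨hs.1, hs.2.trans ht.2⟩
      calc |f s (a s) - f s (b s)| ≤ L * |a s - b s| :=
            hf.abs_sub_le s hsT _ (curveExtend_mem _ _ s) _ (curveExtend_mem _ _ s)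
        _ ≤ L * ((L * s ^ γ) ^ n / Real.Gamma (γ * n + 1) * dist u w) :=
            mul_le_mul_of_nonneg_left (ih hsT) hf.nonneg_L
        _ = L ^ (n + 1) * dist u w / Real.Gamma (γ * n + 1) * s ^ (γ * n) := by
            rw [mul_pow, ← Real.rpow_natCast (s ^ γ), ← Real.rpow_mul hs.1]
            ring
    rw [iterate_succ_apply', iterate_succ_apply', hf.curveExtend_next _ ht,
      hf.curveExtend_next _ ht, add_sub_add_left_eq_sub,
      ← fracIntegral_sub hf.pos (hcont _) (hcont _)]
    refine (abs_fracIntegral_le hf.pos (by have := hf.pos; positivity) ht.1 hstep).trans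
      (le_of_eq ?_)
    have hΓ : Real.Gamma (γ * n + 1) ≠ 0 := by have := hf.pos; positivity
    rw [show γ * ((n + 1 : ℕ) : ℝ) + 1 = γ * n + 1 + γ by push_cast; ring,
      show γ * (n : ℝ) + γ = γ * ((n + 1 : ℕ) : ℝ) by push_cast; ring,
      Real.rpow_mul ht.1, Real.rpow_natCast]
    field_simp
    ring

lemma dist_iterate_next_le (n : ℕ) (u w : C(Icc (0 : ℝ) T, Icc (v₀ - A) (v₀ + A))) :
    dist (hf.next^[n] u) (hf.next^[n] w)
      ≤ (L * T ^ γ) ^ n / Real.Gamma (γ * n + 1) * dist u w := by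
  have := hf.pos
  have := hf.nonneg_L
  have := hf.nonneg_T
  refine (ContinuousMap.dist_le (by positivity)).2 fun t => ?_
  rw [Subtype.dist_eq, Real.dist_eq, ← curveExtend_of_mem hf.nonneg_T _ t.2,
    ← curveExtend_of_mem hf.nonneg_T _ t.2]
  refine (hf.abs_curveExtend_iterate_next_sub_le n u w t.2).trans ?_
  have := t.2.1
  gcongr
  exact t.2.2

lemma exists_contractingWith_iterate_next :
    ∃ (n : ℕ) (K : NNReal), ContractingWith K hf.next^[n] := by
  obtain ⟨n, hn⟩ := (tendsto_pow_div_Gamma_mul_add_one hf.pos (L * T ^ γ)).eventually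
    (gt_mem_nhds zero_lt_one) |>.exists
  have := hf.pos
  have := hf.nonneg_L
  have := hf.nonneg_T
  have hK : 0 ≤ (L * T ^ γ) ^ n / Real.Gamma (γ * n + 1) := by positivity
  exact ⟨n, ⟨_, hK⟩, hn, LipschitzWith.of_dist_le_mul (hf.dist_iterate_next_le n)⟩

lemma isVolterraSolution_of_isFixedPt {u : C(Icc (0 : ℝ) T, Icc (v₀ - A) (v₀ + A))}
    (hu : IsFixedPt hf.next u) : IsVolterraSolution γ f v₀ A T (curveExtend hf.nonneg_T u) :=
  ⟨(continuous_curveExtend _ u).continuousOn, fun t _ => curveExtend_mem _ u t,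
    fun t ht => by rw [← hf.curveExtend_next u ht, hu]⟩

lemma isFixedPt_toContinuousMap {v : ℝ → ℝ} (hv : IsVolterraSolution γ f v₀ A T v) :
    IsFixedPt hf.next hv.toContinuousMap := by
  ext t
  show v₀ + fracIntegral γ _ t = v t
  rw [hv.2.2 t t.2, fracIntegral_congr t.2.1 fun s hs => by
    rw [hv.curveExtend_toContinuousMap hf.nonneg_T ⟨hs.1, hs.2.trans t.2.2⟩]]

theorem exists_unique_isVolterraSolution :
    ∃ v, IsVolterraSolution γ f v₀ A T v ∧
      ∀ w, IsVolterraSolution γ f v₀ A T w → ∀ t ∈ Icc (0 : ℝ) T, w t = v t := by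
  have hA : 0 ≤ A := by
    simpa [Real.zero_rpow hf.pos.ne'] using hf.mul_rpow_le 0 ⟨le_rfl, hf.nonneg_T⟩
  have : Nonempty C(Icc (0 : ℝ) T, Icc (v₀ - A) (v₀ + A)) :=
    ⟨ContinuousMap.const _ ⟨v₀, by constructor <;> linarith⟩⟩
  obtain ⟨n, K, hK⟩ := hf.exists_contractingWith_iterate_next
  refine ⟨_, hf.isVolterraSolution_of_isFixedPt hK.isFixedPt_fixedPoint_iterate,
    fun w hw t ht => ?_⟩
  rw [← hw.curveExtend_toContinuousMap hf.nonneg_T ht,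
    hK.fixedPoint_unique ((hf.isFixedPt_toContinuousMap hw).iterate n)]

end IsFracPicardLindelof

lemma abs_le_sSup_of_continuousOn {f : ℝ → ℝ → ℝ} {a b c d : ℝ}
    (hf : ContinuousOn (fun p : ℝ × ℝ => f p.1 p.2) (Icc a b ×ˢ Icc c d)) {t x : ℝ}
    (ht : t ∈ Icc a b) (hx : x ∈ Icc c d) :
    |f t x| ≤ sSup {y | ∃ t ∈ Icc a b, ∃ x ∈ Icc c d, y = |f t x|} := by
  refine le_csSup (((isCompact_Icc.prod isCompact_Icc).bddAbove_image hf.abs).mono ?_)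
    ⟨t, ht, x, hx, rfl⟩
  rintro _ ⟨t, ht, x, hx, rfl⟩
  exact ⟨(t, x), ⟨ht, hx⟩, rfl⟩

noncomputable def minSSup (T : ℝ) (S : Set ℝ) : ℝ := if BddAbove S then min T (sSup S) else T

lemma minSSup_le (T : ℝ) (S : Set ℝ) : minSSup T S ≤ T := by
  unfold minSSup
  split_ifs
  exacts [min_le_left _ _, le_rfl]

lemma lt_minSSup {S : Set ℝ} {a s T : ℝ} (haT : a < T) (hs : s ∈ S) (has : a < s) :
    a < minSSup T S := by
  unfold minSSup
  split_ifs with hb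
  exacts [lt_min haT (has.trans_le (le_csSup hb hs)), haT]

lemma Ico_subset_minSSup {S : Set ℝ} (hS : S.OrdConnected) {a : ℝ} (ha : a ∈ S) (T : ℝ) :
    Ico a (minSSup T S) ⊆ S := by
  rintro t ⟨hat, ht⟩
  obtain ⟨s, hs, hts⟩ : ∃ s ∈ S, t < s := by
    unfold minSSup at ht
    split_ifs at ht with hb
    · exact exists_lt_of_lt_csSup ⟨a, ha⟩ (ht.trans_le (min_le_right _ _))
    · exact not_bddAbove_iff.mp hb t
  exact hS.out ha hs ⟨hat, hts.le⟩

def admissibleTimes (γ c L A : ℝ) : Set ℝ :=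
  {t | 0 ≤ t ∧ c * t ^ γ * mittagLeffler γ (L * t ^ γ) ≤ A}

section admissibleTimes

variable {γ c L A : ℝ}

lemma mul_rpow_le_of_mem_admissibleTimes (hγ : 0 < γ) (hc : 0 ≤ c) (hL : 0 ≤ L) {t : ℝ}
    (ht : t ∈ admissibleTimes γ c L A) : c * t ^ γ ≤ A :=
  (le_mul_of_one_le_right (by have := ht.1; positivity)
    (one_le_mittagLeffler hγ (by have := ht.1; positivity))).trans ht.2

lemma ordConnected_admissibleTimes (hγ : 0 < γ) (hc : 0 ≤ c) (hL : 0 ≤ L) :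
    (admissibleTimes γ c L A).OrdConnected := by
  refine ⟨fun x hx y hy z hz => ⟨hx.1.trans hz.1, le_trans ?_ hy.2⟩⟩
  have hz0 : 0 ≤ z := hx.1.trans hz.1
  have hγz : z ^ γ ≤ y ^ γ := Real.rpow_le_rpow hz0 hz.2 hγ.le
  have hy0 : 0 ≤ y := hz0.trans hz.2
  exact mul_le_mul (by gcongr)
    (mittagLeffler_le_mittagLeffler hγ (by positivity) (by gcongr))
    (zero_le_one.trans (one_le_mittagLeffler hγ (by positivity))) (by positivity)

lemma zero_mem_admissibleTimes (hγ : 0 < γ) (hA : 0 ≤ A) : 0 ∈ admissibleTimes γ c L A :=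
  ⟨le_rfl, by simpa [Real.zero_rpow hγ.ne'] using hA⟩

lemma exists_pos_mem_admissibleTimes (hγ : 0 < γ) (hc : 0 ≤ c) (hL : 0 ≤ L) (hA : 0 < A) :
    ∃ t ∈ admissibleTimes γ c L A, 0 < t := by
  have hlim : Tendsto (fun t : ℝ => c * mittagLeffler γ L * t ^ γ) (𝓝[>] 0) (𝓝 0) := by
    have : Continuous fun t : ℝ => c * mittagLeffler γ L * t ^ γ :=
      continuous_const.mul (Real.continuous_rpow_const hγ.le)
    simpa [Real.zero_rpow hγ.ne'] using (this.tendsto 0).mono_left nhdsWithin_le_nhds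
  obtain ⟨t, htA, ht⟩ := ((hlim.eventually (gt_mem_nhds hA)).and
    (Ioc_mem_nhdsGT zero_lt_one)).exists
  refine ⟨t, ⟨ht.1.le, le_trans ?_ htA.le⟩, ht.1⟩
  have ht1 : t ^ γ ≤ 1 := Real.rpow_le_one ht.1.le ht.2 hγ.le
  calc c * t ^ γ * mittagLeffler γ (L * t ^ γ) ≤ c * t ^ γ * mittagLeffler γ L := by
        have := ht.1.le
        gcongr
        exact mittagLeffler_le_mittagLeffler hγ (by positivity) (mul_le_of_le_one_right hL ht1)
    _ = c * mittagLeffler γ L * t ^ γ := by ring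

lemma mul_rpow_le_of_mem_Icc_minSSup (hγ : 0 < γ) (hc : 0 ≤ c) (hL : 0 ≤ L) (hA : 0 ≤ A)
    {T : ℝ} (hT : 0 < minSSup T (admissibleTimes γ c L A)) :
    ∀ t ∈ Icc 0 (minSSup T (admissibleTimes γ c L A)), c * t ^ γ ≤ A := by
  have hIco : Ico 0 (minSSup T (admissibleTimes γ c L A)) ⊆ {t | c * t ^ γ ≤ A} :=
    fun t ht => mul_rpow_le_of_mem_admissibleTimes hγ hc hL
      (Ico_subset_minSSup (ordConnected_admissibleTimes hγ hc hL)
        (zero_mem_admissibleTimes hγ hA) T ht)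
  rw [← closure_Ico hT.ne]
  exact closure_minimal hIco
    (isClosed_le (continuous_const.mul (Real.continuous_rpow_const hγ.le)) continuous_const)

end admissibleTimes

end FractionalODE

open FractionalODE

/-- Local existence and uniqueness for the fractional ODE `D_c^γ v = f(t,v)`, `v(0) = v₀`
(`0 < γ < 1`), with `f` continuous and Lipschitz in `v` on
`D = [0,T] × [v₀−A, v₀+A]`: with `M = sup_D |f|` and
`T₁ = min{T, sup{t ≥ 0 : (M/Γ(1+γ)) t^γ E_γ(L t^γ) ≤ A}}`, one has `T₁ > 0` and there is
a unique continuous `v : [0,T₁] → [v₀−A, v₀+A]` solving the Volterra integral equation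
`v(t) = v₀ + (1/Γ(γ)) ∫_0^t (t−s)^{γ−1} f(s, v(s)) ds` on `[0,T₁]`. -/
theorem fode_local_existence_uniqueness
    (γ : ℝ) (hγ0 : 0 < γ) (hγ1 : γ < 1) (v₀ : ℝ) (T A L : ℝ)
    (hT : 0 < T) (hA : 0 < A) (hL : 0 < L)
    (f : ℝ → ℝ → ℝ)
    (hfc : ContinuousOn (fun p : ℝ × ℝ => f p.1 p.2)
      (Icc 0 T ×ˢ Icc (v₀ - A) (v₀ + A)))
    (hlip : ∀ t ∈ Icc (0:ℝ) T, ∀ v₁ ∈ Icc (v₀ - A) (v₀ + A),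
      ∀ v₂ ∈ Icc (v₀ - A) (v₀ + A), |f t v₁ - f t v₂| ≤ L * |v₁ - v₂|)
    (M : ℝ)
    (hM : M = sSup {y : ℝ | ∃ t ∈ Icc (0:ℝ) T, ∃ x ∈ Icc (v₀ - A) (v₀ + A), y = |f t x|})
    (S : Set ℝ)
    (hS : S = {t : ℝ | 0 ≤ t ∧
      (M / Real.Gamma (1 + γ)) * t ^ γ * mittagLeffler γ (L * t ^ γ) ≤ A})
    (T₁ : ℝ)
    (hT₁ : T₁ = if BddAbove S then min T (sSup S) else T) :
    0 < T₁ ∧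
    ∃ v : ℝ → ℝ,
      (ContinuousOn v (Icc 0 T₁) ∧
        (∀ t ∈ Icc (0:ℝ) T₁, v t ∈ Icc (v₀ - A) (v₀ + A)) ∧
        (∀ t ∈ Icc (0:ℝ) T₁,
          v t = v₀ + (1 / Real.Gamma γ) *
            ∫ s in (0:ℝ)..t, (t - s) ^ (γ - 1) * f s (v s))) ∧
      ∀ w : ℝ → ℝ,
        (ContinuousOn w (Icc 0 T₁) ∧
          (∀ t ∈ Icc (0:ℝ) T₁, w t ∈ Icc (v₀ - A) (v₀ + A)) ∧
          (∀ t ∈ Icc (0:ℝ) T₁,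
            w t = v₀ + (1 / Real.Gamma γ) *
              ∫ s in (0:ℝ)..t, (t - s) ^ (γ - 1) * f s (w s))) →
        ∀ t ∈ Icc (0:ℝ) T₁, w t = v t := by
  have hfM : ∀ t ∈ Icc 0 T, ∀ x ∈ Icc (v₀ - A) (v₀ + A), |f t x| ≤ M :=
    fun t ht x hx => hM ▸ abs_le_sSup_of_continuousOn hfc ht hx
  have hc : 0 ≤ M / Real.Gamma (1 + γ) :=
    div_nonneg ((abs_nonneg _).trans (hfM 0 ⟨le_rfl, hT.le⟩ v₀ ⟨by linarith, by linarith⟩))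
      (by positivity)
  subst hS hT₁
  obtain ⟨t₀, ht₀S, ht₀⟩ := exists_pos_mem_admissibleTimes hγ0 hc hL.le hA
  have hT₁ : 0 < minSSup T (admissibleTimes γ (M / Real.Gamma (1 + γ)) L A) :=
    lt_minSSup hT ht₀S ht₀
  have hT₁T : Icc 0 (minSSup T (admissibleTimes γ (M / Real.Gamma (1 + γ)) L A)) ⊆ Icc 0 T :=
    Icc_subset_Icc_right (minSSup_le _ _)
  exact ⟨hT₁, IsFracPicardLindelof.exists_unique_isVolterraSolution
    ⟨hγ0, hγ1.le, hT₁.le, hL.le, hfc.mono (prod_mono hT₁T subset_rfl),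
      fun t ht => hlip t (hT₁T ht), fun t ht => hfM t (hT₁T ht),
      mul_rpow_le_of_mem_Icc_minSSup hγ0 hc hL.le hA.le hT₁⟩⟩
end

section
/- (Fractional Grönwall inequality / comparison principle.) Let 0 < γ < 1 and T_b ∈ (0, ∞]. Let f : [0, ∞) × ℝ → ℝ be continuous, Lipschitz in the second variable on every set [0, T] × [−M, M], and nondecreasing in the second variable (for every t ≥ 0, x ≤ y implies f(t, x) ≤ f(t, y)). Suppose v₁ : [0, T_b) → ℝ is continuous and satisfies v₁(t) ≤ v₁(0) + (1/Γ(γ)) ∫_0^t (t−s)^{γ−1} f(s, v₁(s)) ds for all t ∈ [0, T_b), and v₂ : [0, T_b) → ℝ is continuous and satisfies v₂(t) = v₂(0) + (1/Γ(γ)) ∫_0^t (t−s)^{γ−1} f(s, v₂(s)) ds for all t ∈ [0, T_b), with v₂(0) ≥ v₁(0). Then v₁(t) ≤ v₂(t) for all t ∈ [0, T_b). -/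
open MeasureTheory Set Filter Topology
open scoped ENNReal

/-!
Since `f` is nondecreasing in its second argument and locally Lipschitz, on each `[0, t]` the
function `φ = max (v₁ - v₂) 0` satisfies `φ ≤ L • I^γ φ`, where `I^γ` is the Riemann–Liouville
integral. Such a `φ` vanishes: if `φ = 0` on `[0, a]` and `A` is the maximum of `φ` on
`[a, a + δ]`, then `A ≤ L A δ^γ / Γ(γ + 1)`, which forces `A = 0` once `δ` is small; steps of
length `δ` then cover `[0, t]`.
-/

noncomputable def riemannLiouville (γ : ℝ) (g : ℝ → ℝ) (t : ℝ) : ℝ :=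
  1 / Real.Gamma γ * ∫ s in (0:ℝ)..t, (t - s) ^ (γ - 1) * g s

lemma intervalIntegrable_rpow_comp_sub_left_mul {γ : ℝ} (hγ : 0 < γ) (u : ℝ) {a b : ℝ}
    {g : ℝ → ℝ} (hg : ContinuousOn g (uIcc a b)) :
    IntervalIntegrable (fun r => (u - r) ^ (γ - 1) * g r) volume a b := by
  have hk : IntervalIntegrable (fun x : ℝ => x ^ (γ - 1)) volume (u - a) (u - b) :=
    intervalIntegral.intervalIntegrable_rpow' (by linarith)
  have hk_shift := hk.comp_sub_left u
  simp only [sub_sub_cancel] at hk_shift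
  exact hk_shift.mul_continuousOn hg

lemma integral_rpow_comp_sub_left {γ : ℝ} (hγ : 0 < γ) (a u : ℝ) :
    ∫ r in a..u, (u - r) ^ (γ - 1) = (u - a) ^ γ / γ := by
  rw [intervalIntegral.integral_comp_sub_left (fun x => x ^ (γ - 1)) u, sub_self,
    integral_rpow (Or.inl (by linarith)), sub_add_cancel, Real.zero_rpow hγ.ne', sub_zero]

section riemannLiouville

variable {γ t : ℝ} {g h : ℝ → ℝ}

lemma riemannLiouville_nonneg (hγ : 0 < γ) (ht : 0 ≤ t) (hg : ∀ s ∈ Icc 0 t, 0 ≤ g s) :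
    0 ≤ riemannLiouville γ g t :=
  mul_nonneg (one_div_nonneg.2 (Real.Gamma_pos_of_pos hγ).le) <|
    intervalIntegral.integral_nonneg ht fun s hs =>
      mul_nonneg (Real.rpow_nonneg (sub_nonneg.2 hs.2) _) (hg s hs)

lemma riemannLiouville_mono (hγ : 0 < γ) (ht : 0 ≤ t) (hg : ContinuousOn g (Icc 0 t))
    (hh : ContinuousOn h (Icc 0 t)) (hgh : ∀ s ∈ Icc 0 t, g s ≤ h s) :
    riemannLiouville γ g t ≤ riemannLiouville γ h t := by
  rw [← uIcc_of_le ht] at hg hh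
  refine mul_le_mul_of_nonneg_left ?_ (one_div_nonneg.2 (Real.Gamma_pos_of_pos hγ).le)
  exact intervalIntegral.integral_mono_on ht (intervalIntegrable_rpow_comp_sub_left_mul hγ t hg)
    (intervalIntegrable_rpow_comp_sub_left_mul hγ t hh) fun s hs =>
      mul_le_mul_of_nonneg_left (hgh s hs) (Real.rpow_nonneg (sub_nonneg.2 hs.2) _)

lemma riemannLiouville_sub (hγ : 0 < γ) (ht : 0 ≤ t) (hg : ContinuousOn g (Icc 0 t))
    (hh : ContinuousOn h (Icc 0 t)) :
    riemannLiouville γ (fun s => g s - h s) t =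
      riemannLiouville γ g t - riemannLiouville γ h t := by
  rw [← uIcc_of_le ht] at hg hh
  simp only [riemannLiouville, ← mul_sub, ← intervalIntegral.integral_sub
    (intervalIntegrable_rpow_comp_sub_left_mul hγ t hg)
    (intervalIntegrable_rpow_comp_sub_left_mul hγ t hh)]

lemma riemannLiouville_const_mul (c : ℝ) :
    riemannLiouville γ (fun s => c * g s) t = c * riemannLiouville γ g t := by
  simp only [riemannLiouville, mul_left_comm _ c, intervalIntegral.integral_const_mul]

lemma riemannLiouville_le_of_nonpos_of_le (hγ : 0 < γ) {a A : ℝ} (ha : 0 ≤ a) (hat : a ≤ t)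
    (hg : ContinuousOn g (Icc 0 t)) (hg_nonpos : ∀ s ∈ Icc 0 a, g s ≤ 0)
    (hg_le : ∀ s ∈ Icc a t, g s ≤ A) :
    riemannLiouville γ g t ≤ A * (t - a) ^ γ / Real.Gamma (γ + 1) := by
  have hint : ∀ {x y}, Icc x y ⊆ Icc 0 t → x ≤ y →
      IntervalIntegrable (fun s => (t - s) ^ (γ - 1) * g s) volume x y := fun hxy hle =>
    intervalIntegrable_rpow_comp_sub_left_mul hγ t (hg.mono (uIcc_of_le hle ▸ hxy))
  have hkernel : ∀ s ∈ Icc 0 t, 0 ≤ (t - s) ^ (γ - 1) := fun s hs =>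
    Real.rpow_nonneg (sub_nonneg.2 hs.2) _
  have hleft : ∫ s in (0:ℝ)..a, (t - s) ^ (γ - 1) * g s ≤ 0 := by
    simpa using intervalIntegral.integral_mono_on ha (hint (Icc_subset_Icc_right hat) ha)
      intervalIntegrable_const fun s hs => show _ ≤ (0:ℝ) from
        mul_nonpos_of_nonneg_of_nonpos (hkernel s ⟨hs.1, hs.2.trans hat⟩) (hg_nonpos s hs)
  have hright : ∫ s in a..t, (t - s) ^ (γ - 1) * g s ≤ (t - a) ^ γ / γ * A := by
    rw [← integral_rpow_comp_sub_left hγ, ← intervalIntegral.integral_mul_const]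
    refine intervalIntegral.integral_mono_on hat (hint (Icc_subset_Icc_left ha) hat)
      (intervalIntegrable_rpow_comp_sub_left_mul hγ t continuousOn_const) fun s hs => ?_
    exact mul_le_mul_of_nonneg_left (hg_le s hs) (hkernel s ⟨ha.trans hs.1, hs.2⟩)
  have hΓ : 0 < Real.Gamma γ := Real.Gamma_pos_of_pos hγ
  rw [riemannLiouville, ← intervalIntegral.integral_add_adjacent_intervals
    (hint (Icc_subset_Icc_right hat) ha) (hint (Icc_subset_Icc_left ha) hat),
    Real.Gamma_add_one hγ.ne']
  calc 1 / Real.Gamma γ * ((∫ s in (0:ℝ)..a, (t - s) ^ (γ - 1) * g s) +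
        ∫ s in a..t, (t - s) ^ (γ - 1) * g s)
      ≤ 1 / Real.Gamma γ * ((t - a) ^ γ / γ * A) := by gcongr; linarith
    _ = A * (t - a) ^ γ / (γ * Real.Gamma γ) := by field_simp

end riemannLiouville

section gronwall

variable {γ K : ℝ} {φ : ℝ → ℝ}

lemma nonpos_of_le_mul_riemannLiouville_of_nonpos (hγ : 0 < γ) (hK : 0 ≤ K) {δ : ℝ}
    (hδ : K * δ ^ γ < Real.Gamma (γ + 1)) {a b : ℝ} (ha : 0 ≤ a) (hab : a ≤ b)
    (hba : b - a ≤ δ) (hφ : ContinuousOn φ (Icc 0 b))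
    (hle : ∀ u ∈ Icc 0 b, φ u ≤ K * riemannLiouville γ φ u) (hφa : ∀ s ∈ Icc 0 a, φ s ≤ 0) :
    ∀ s ∈ Icc 0 b, φ s ≤ 0 := by
  obtain ⟨r, hr, hmax⟩ := isCompact_Icc.exists_isMaxOn (nonempty_Icc.2 hab)
    (hφ.mono (Icc_subset_Icc_left ha))
  have hr_nonpos : φ r ≤ 0 := by
    by_contra! hpos
    have hΓ : 0 < Real.Gamma (γ + 1) := Real.Gamma_pos_of_pos (by linarith)
    have hbound := riemannLiouville_le_of_nonpos_of_le hγ ha hr.1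
      (hφ.mono (Icc_subset_Icc_right hr.2)) hφa fun s hs => hmax ⟨hs.1, hs.2.trans hr.2⟩
    have hpow : (r - a) ^ γ ≤ δ ^ γ :=
      Real.rpow_le_rpow (sub_nonneg.2 hr.1) (by linarith [hr.2]) hγ.le
    have : φ r ≤ φ r * (K * δ ^ γ) / Real.Gamma (γ + 1) :=
      calc φ r ≤ K * riemannLiouville γ φ r := hle r ⟨ha.trans hr.1, hr.2⟩
        _ ≤ K * (φ r * (r - a) ^ γ / Real.Gamma (γ + 1)) := by gcongr
        _ = φ r * (K * (r - a) ^ γ) / Real.Gamma (γ + 1) := by ring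
        _ ≤ φ r * (K * δ ^ γ) / Real.Gamma (γ + 1) := by gcongr
    rw [le_div_iff₀ hΓ] at this
    nlinarith
  intro s hs
  rcases le_or_gt s a with hsa | has
  · exact hφa s ⟨hs.1, hsa⟩
  · exact (hmax ⟨has.le, hs.2⟩).trans hr_nonpos

theorem nonpos_of_le_mul_riemannLiouville (hγ : 0 < γ) (hK : 0 ≤ K) {t : ℝ}
    (hφ : ContinuousOn φ (Icc 0 t)) (hle : ∀ u ∈ Icc 0 t, φ u ≤ K * riemannLiouville γ φ u) :
    ∀ u ∈ Icc 0 t, φ u ≤ 0 := by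
  have hsmall : ∀ᶠ δ in 𝓝[>] (0:ℝ), K * δ ^ γ < Real.Gamma (γ + 1) := by
    have hcont : Tendsto (fun δ : ℝ => K * δ ^ γ) (𝓝 0) (𝓝 0) := by
      simpa [Real.zero_rpow hγ.ne'] using
        (Real.continuousAt_rpow_const 0 γ (Or.inr hγ.le)).tendsto.const_mul K
    exact nhdsWithin_le_nhds <|
      hcont.eventually (gt_mem_nhds (Real.Gamma_pos_of_pos (by linarith)))
  obtain ⟨δ, hδ, hδ_pos⟩ := (hsmall.and self_mem_nhdsWithin).exists
  have hstep : ∀ n : ℕ, ∀ u ∈ Icc 0 t, u ≤ n * δ → φ u ≤ 0 := by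
    intro n
    induction n with
    | zero =>
      intro u hu hu0
      obtain rfl : u = 0 := le_antisymm (by simpa using hu0) hu.1
      simpa [riemannLiouville] using hle 0 hu
    | succ n ih =>
      intro u hu hun
      rcases le_or_gt u (n * δ) with h | h
      · exact ih u hu h
      · refine nonpos_of_le_mul_riemannLiouville_of_nonpos hγ hK hδ (by positivity) h.le
          (by push_cast at hun; linarith) (hφ.mono (Icc_subset_Icc_right hu.2))
          (fun v hv => hle v ⟨hv.1, hv.2.trans hu.2⟩)
          (fun s hs => ih s ⟨hs.1, by linarith [hs.2, hu.2]⟩ hs.2) u ⟨hu.1, le_rfl⟩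
  intro u hu
  obtain ⟨n, hn⟩ := exists_nat_ge (u / δ)
  exact hstep n u hu (by rwa [div_le_iff₀ hδ_pos] at hn)

end gronwall

lemma Monotone.sub_le_mul_max_sub_zero {g : ℝ → ℝ} (hg : Monotone g) {L x y : ℝ}
    (hxy : |g x - g y| ≤ L * |x - y|) : g x - g y ≤ L * max (x - y) 0 := by
  rcases le_or_gt x y with h | h
  · simpa [h] using hg h
  · rw [max_eq_left (sub_nonneg.2 h.le), ← abs_of_pos (sub_pos.2 h)]
    exact (le_abs_self _).trans hxy

theorem le_of_riemannLiouville_subsolution_supersolution {γ t L : ℝ} (hγ : 0 < γ) (hL : 0 ≤ L)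
    {v₁ v₂ g₁ g₂ : ℝ → ℝ} (hv₁c : ContinuousOn v₁ (Icc 0 t)) (hv₂c : ContinuousOn v₂ (Icc 0 t))
    (hg₁c : ContinuousOn g₁ (Icc 0 t)) (hg₂c : ContinuousOn g₂ (Icc 0 t))
    (hv₁ : ∀ u ∈ Icc 0 t, v₁ u ≤ v₁ 0 + riemannLiouville γ g₁ u)
    (hv₂ : ∀ u ∈ Icc 0 t, v₂ 0 + riemannLiouville γ g₂ u ≤ v₂ u)
    (hg : ∀ s ∈ Icc 0 t, g₁ s - g₂ s ≤ L * max (v₁ s - v₂ s) 0) (h0 : v₁ 0 ≤ v₂ 0) :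
    ∀ u ∈ Icc 0 t, v₁ u ≤ v₂ u := by
  set φ : ℝ → ℝ := fun s => max (v₁ s - v₂ s) 0
  have hφc : ContinuousOn φ (Icc 0 t) := (hv₁c.sub hv₂c).sup continuousOn_const
  have hφ : ∀ u ∈ Icc 0 t, φ u ≤ L * riemannLiouville γ φ u := by
    intro u hu
    have hsub : Icc 0 u ⊆ Icc 0 t := Icc_subset_Icc_right hu.2
    refine max_le ?_ (mul_nonneg hL (riemannLiouville_nonneg hγ hu.1 fun s _ => le_max_right _ _))
    calc v₁ u - v₂ u ≤ riemannLiouville γ g₁ u - riemannLiouville γ g₂ u := by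
          linarith [hv₁ u hu, hv₂ u hu]
      _ = riemannLiouville γ (fun s => g₁ s - g₂ s) u :=
          (riemannLiouville_sub hγ hu.1 (hg₁c.mono hsub) (hg₂c.mono hsub)).symm
      _ ≤ riemannLiouville γ (fun s => L * φ s) u :=
          riemannLiouville_mono hγ hu.1 ((hg₁c.sub hg₂c).mono hsub)
            ((continuousOn_const.mul hφc).mono hsub) fun s hs => hg s (hsub hs)
      _ = L * riemannLiouville γ φ u := riemannLiouville_const_mul L
  intro u hu
  linarith [le_max_left (v₁ u - v₂ u) 0, nonpos_of_le_mul_riemannLiouville hγ hL hφc hφ u hu]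

lemma exists_sub_le_mul_max_sub_zero {f : ℝ → ℝ → ℝ}
    (hlip : ∀ T > (0:ℝ), ∀ M > (0:ℝ), ∃ L > (0:ℝ), ∀ t ∈ Icc (0:ℝ) T,
      ∀ x ∈ Icc (-M) M, ∀ y ∈ Icc (-M) M, |f t x - f t y| ≤ L * |x - y|)
    (hmono : ∀ t : ℝ, 0 ≤ t → ∀ x y : ℝ, x ≤ y → f t x ≤ f t y) {t : ℝ} {v₁ v₂ : ℝ → ℝ}
    (hv₁ : ContinuousOn v₁ (Icc 0 t)) (hv₂ : ContinuousOn v₂ (Icc 0 t)) :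
    ∃ L, 0 ≤ L ∧ ∀ s ∈ Icc 0 t, f s (v₁ s) - f s (v₂ s) ≤ L * max (v₁ s - v₂ s) 0 := by
  obtain ⟨C, hC⟩ := isCompact_Icc.exists_bound_of_continuousOn (hv₁.prodMk hv₂)
  have hM : ∀ s ∈ Icc 0 t, v₁ s ∈ Icc (-max C 1) (max C 1) ∧ v₂ s ∈ Icc (-max C 1) (max C 1) :=
    fun s hs => ⟨abs_le.1 ((norm_fst_le _).trans ((hC s hs).trans (le_max_left _ _))),
      abs_le.1 ((norm_snd_le _).trans ((hC s hs).trans (le_max_left _ _)))⟩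
  obtain ⟨L, hL, hLip⟩ := hlip (max t 1) (by positivity) (max C 1) (by positivity)
  refine ⟨L, hL.le, fun s hs => Monotone.sub_le_mul_max_sub_zero (hmono s hs.1) ?_⟩
  exact hLip s ⟨hs.1, hs.2.trans (le_max_left _ _)⟩ _ (hM s hs).1 _ (hM s hs).2

theorem fractional_gronwall_comparison_general
    (γ : ℝ) (hγ0 : 0 < γ) (Tb : ℝ≥0∞)
    (f : ℝ → ℝ → ℝ)
    (hfc : ContinuousOn (fun p : ℝ × ℝ => f p.1 p.2) (Ici 0 ×ˢ univ))
    (hlip : ∀ T > (0:ℝ), ∀ M > (0:ℝ), ∃ L > (0:ℝ), ∀ t ∈ Icc (0:ℝ) T,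
      ∀ x ∈ Icc (-M) M, ∀ y ∈ Icc (-M) M, |f t x - f t y| ≤ L * |x - y|)
    (hmono : ∀ t : ℝ, 0 ≤ t → ∀ x y : ℝ, x ≤ y → f t x ≤ f t y)
    (v₁ v₂ : ℝ → ℝ)
    (hv₁c : ContinuousOn v₁ {t : ℝ | 0 ≤ t ∧ ENNReal.ofReal t < Tb})
    (hv₂c : ContinuousOn v₂ {t : ℝ | 0 ≤ t ∧ ENNReal.ofReal t < Tb})
    (hv₁ : ∀ t : ℝ, 0 ≤ t → ENNReal.ofReal t < Tb →
      v₁ t ≤ v₁ 0 + (1 / Real.Gamma γ) *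
        ∫ s in (0:ℝ)..t, (t - s) ^ (γ - 1) * f s (v₁ s))
    (hv₂ : ∀ t : ℝ, 0 ≤ t → ENNReal.ofReal t < Tb →
      v₂ t = v₂ 0 + (1 / Real.Gamma γ) *
        ∫ s in (0:ℝ)..t, (t - s) ^ (γ - 1) * f s (v₂ s))
    (h0 : v₁ 0 ≤ v₂ 0) :
    ∀ t : ℝ, 0 ≤ t → ENNReal.ofReal t < Tb → v₁ t ≤ v₂ t := by
  intro t ht htTb
  have hsub : Icc 0 t ⊆ {s : ℝ | 0 ≤ s ∧ ENNReal.ofReal s < Tb} := fun s hs =>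
    ⟨hs.1, (ENNReal.ofReal_le_ofReal hs.2).trans_lt htTb⟩
  have hv₁t := hv₁c.mono hsub
  have hv₂t := hv₂c.mono hsub
  have hcomp : ∀ v : ℝ → ℝ, ContinuousOn v (Icc 0 t) →
      ContinuousOn (fun s => f s (v s)) (Icc 0 t) := fun v hv =>
    hfc.comp (continuousOn_id.prodMk hv) fun s hs => ⟨hs.1, mem_univ _⟩
  obtain ⟨L, hL, hfL⟩ := exists_sub_le_mul_max_sub_zero hlip hmono hv₁t hv₂t
  exact le_of_riemannLiouville_subsolution_supersolution hγ0 hL hv₁t hv₂t (hcomp v₁ hv₁t)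
    (hcomp v₂ hv₂t) (fun u hu => hv₁ u hu.1 (hsub hu).2)
    (fun u hu => (hv₂ u hu.1 (hsub hu).2).ge) hfL h0 t ⟨ht, le_rfl⟩

/-- Fractional Grönwall inequality / comparison principle: for `0 < γ < 1`,
`T_b ∈ (0,∞]`, `f` continuous on `[0,∞) × ℝ`, Lipschitz in the second variable on every
`[0,T] × [−M,M]`, and nondecreasing in the second variable; if `v₁` is continuous on
`[0,T_b)` and satisfies the integral inequality
`v₁(t) ≤ v₁(0) + (1/Γ(γ)) ∫_0^t (t−s)^{γ−1} f(s, v₁(s)) ds` (i.e. `D_c^γ v₁ ≤ f(t,v₁)`),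
`v₂` is a continuous solution of the corresponding integral equation on `[0,T_b)`
(i.e. `D_c^γ v₂ = f(t,v₂)`), and `v₂(0) ≥ v₁(0)`, then `v₁ ≤ v₂` on `[0,T_b)`. -/
theorem fractional_gronwall_comparison
    (γ : ℝ) (hγ0 : 0 < γ) (hγ1 : γ < 1) (Tb : ℝ≥0∞) (hTb : 0 < Tb)
    (f : ℝ → ℝ → ℝ)
    (hfc : ContinuousOn (fun p : ℝ × ℝ => f p.1 p.2) (Ici 0 ×ˢ univ))
    (hlip : ∀ T > (0:ℝ), ∀ M > (0:ℝ), ∃ L > (0:ℝ), ∀ t ∈ Icc (0:ℝ) T,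
      ∀ x ∈ Icc (-M) M, ∀ y ∈ Icc (-M) M, |f t x - f t y| ≤ L * |x - y|)
    (hmono : ∀ t : ℝ, 0 ≤ t → ∀ x y : ℝ, x ≤ y → f t x ≤ f t y)
    (v₁ v₂ : ℝ → ℝ)
    (hv₁c : ContinuousOn v₁ {t : ℝ | 0 ≤ t ∧ ENNReal.ofReal t < Tb})
    (hv₂c : ContinuousOn v₂ {t : ℝ | 0 ≤ t ∧ ENNReal.ofReal t < Tb})
    (hv₁ : ∀ t : ℝ, 0 ≤ t → ENNReal.ofReal t < Tb →
      v₁ t ≤ v₁ 0 + (1 / Real.Gamma γ) *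
        ∫ s in (0:ℝ)..t, (t - s) ^ (γ - 1) * f s (v₁ s))
    (hv₂ : ∀ t : ℝ, 0 ≤ t → ENNReal.ofReal t < Tb →
      v₂ t = v₂ 0 + (1 / Real.Gamma γ) *
        ∫ s in (0:ℝ)..t, (t - s) ^ (γ - 1) * f s (v₂ s))
    (h0 : v₁ 0 ≤ v₂ 0) :
    ∀ t : ℝ, 0 ≤ t → ENNReal.ofReal t < Tb → v₁ t ≤ v₂ t :=
  fractional_gronwall_comparison_general γ hγ0 Tb f hfc hlip hmono v₁ v₂ hv₁c hv₂c hv₁ hv₂ h0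
end

section
/- (Fractional Grönwall uniqueness lemma.) Let 0 < γ < 1, T > 0 and L > 0. Suppose w : [0, T] → ℝ is continuous, w(t) ≥ 0 for all t, and w(t) ≤ (L/Γ(γ)) ∫_0^t (t−s)^{γ−1} w(s) ds for all t ∈ [0, T]. Then w(t) = 0 for all t ∈ [0, T]. -/
open MeasureTheory Set
open scoped ENNReal

open intervalIntegral in
private lemma aux_integral_rpow {r a b : ℝ} (h : -1 < r) :
    ∫ x in a..b, x ^ r = (b ^ (r + 1) - a ^ (r + 1)) / (r + 1) :=
  integral_rpow (Or.inl h)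

/-- Fractional Grönwall uniqueness lemma: for `0 < γ < 1`, `T > 0`, `L > 0`, if
`w : [0,T] → ℝ` is continuous, nonnegative, and satisfies
`w(t) ≤ (L/Γ(γ)) ∫_0^t (t−s)^{γ−1} w(s) ds` for all `t ∈ [0,T]`, then `w ≡ 0` on `[0,T]`. -/
theorem fractional_gronwall_uniqueness
    (γ : ℝ) (hγ0 : 0 < γ) (hγ1 : γ < 1) (T L : ℝ) (hT : 0 < T) (hL : 0 < L)
    (w : ℝ → ℝ)
    (hwc : ContinuousOn w (Icc 0 T))
    (hwnn : ∀ t ∈ Icc (0:ℝ) T, 0 ≤ w t)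
    (hw : ∀ t ∈ Icc (0:ℝ) T,
      w t ≤ (L / Real.Gamma γ) * ∫ s in (0:ℝ)..t, (t - s) ^ (γ - 1) * w s) :
    ∀ t ∈ Icc (0:ℝ) T, w t = 0 := by
  have hΓ : 0 < Real.Gamma γ := Real.Gamma_pos_of_pos hγ0
  set K := L / Real.Gamma γ with hKdef
  have hKpos : 0 < K := div_pos hL hΓ
  set c := K / γ with hcdef
  have hcpos : 0 < c := div_pos hKpos hγ0
  set δ := (1/(2*c)) ^ γ⁻¹ with hδdef
  have hδpos : 0 < δ := Real.rpow_pos_of_pos (by positivity) _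
  have hδγ : δ ^ γ = 1/(2*c) := Real.rpow_inv_rpow (by positivity) (ne_of_gt hγ0)
  have key : ∀ n : ℕ, ∀ t ∈ Icc (0:ℝ) (min (n*δ) T), w t = 0 := by
    intro n
    induction n with
    | zero =>
      intro t ht
      simp only [Nat.cast_zero, zero_mul, min_eq_left hT.le] at ht
      have ht0 : t = 0 := le_antisymm ht.2 ht.1
      subst ht0
      have h1 := hw 0 ⟨le_rfl, hT.le⟩
      simp only [intervalIntegral.integral_same, mul_zero] at h1
      exact le_antisymm h1 (hwnn 0 ⟨le_rfl, hT.le⟩)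
    | succ n ih =>
      set a := min ((n:ℝ)*δ) T with hadef
      set b := min (((n:ℕ)+1:ℕ)*δ) T with hbdef
      have ha0 : 0 ≤ a := le_min (by positivity) hT.le
      have hab : a ≤ b := by
        apply min_le_min _ le_rfl
        push_cast
        nlinarith [hδpos]
      have hbT : b ≤ T := min_le_right _ _
      have haT : a ≤ T := min_le_right _ _
      -- maximum of w on [a,b]
      obtain ⟨t₀, ht₀mem, ht₀max⟩ :=
        isCompact_Icc.exists_isMaxOn (nonempty_Icc.mpr hab)
          (hwc.mono (Icc_subset_Icc ha0 hbT))
      set M := w t₀ with hMdef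
      have hM0 : 0 ≤ M := hwnn t₀ (Icc_subset_Icc ha0 hbT ht₀mem)
      have hbound : ∀ t ∈ Icc a b, w t ≤ (1/2) * M := by
        intro t ht
        rcases ht.1.eq_or_lt with heq | hat
        · have : w t = 0 := ih t ⟨ha0.trans ht.1, heq.ge⟩
          rw [this]; linarith
        · have htT : t ≤ T := ht.2.trans hbT
          have haT' : a < T := lt_of_lt_of_le hat htT
          have hnδT : (n:ℝ)*δ ≤ T := by
            by_contra h
            push_neg at h
            have : a = T := min_eq_right h.le
            exact absurd this (ne_of_lt haT')
          have haeq : a = (n:ℝ)*δ := min_eq_left hnδT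
          have htaδ : t - a ≤ δ := by
            have h1 : t ≤ ((n:ℕ)+1:ℕ)*δ := ht.2.trans (min_le_left _ _)
            rw [haeq]
            push_cast at h1 ⊢
            nlinarith
          have hta : (0:ℝ) < t - a := sub_pos.mpr hat
          have hrpow_int : IntervalIntegrable (fun s => (t - s) ^ (γ - 1)) volume a t := by
            have h1 : IntervalIntegrable (fun x : ℝ => x ^ (γ-1)) volume 0 (t - a) :=
              intervalIntegral.intervalIntegrable_rpow' (by linarith)
            have h2 := h1.comp_sub_left t
            simpa using h2.symm
          have hInt2 : IntervalIntegrable (fun s => (t-s)^(γ-1) * w s) volume a t := by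
            apply hrpow_int.mul_continuousOn
            rw [uIcc_of_le hat.le]
            exact hwc.mono (Icc_subset_Icc ha0 htT)
          have hInt1 : IntervalIntegrable (fun s => (t-s)^(γ-1) * w s) volume 0 a := by
            apply ContinuousOn.intervalIntegrable
            rw [uIcc_of_le ha0]
            apply ContinuousOn.mul
            · apply ContinuousOn.rpow_const (by fun_prop)
              intro s hs
              exact Or.inl (ne_of_gt (by linarith [hs.2]))
            · exact hwc.mono (Icc_subset_Icc le_rfl haT)
          have hzero : (∫ s in (0:ℝ)..a, (t-s)^(γ-1) * w s) = 0 := by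
            rw [intervalIntegral.integral_congr (g := fun _ => (0:ℝ))]
            · simp
            · intro s hs
              rw [uIcc_of_le ha0] at hs
              have : w s = 0 := ih s hs
              simp [this]
          have hsplit : (∫ s in (0:ℝ)..t, (t-s)^(γ-1) * w s)
              = ∫ s in a..t, (t-s)^(γ-1) * w s := by
            rw [← intervalIntegral.integral_add_adjacent_intervals hInt1 hInt2, hzero, zero_add]
          have hmono : (∫ s in a..t, (t-s)^(γ-1) * w s)
              ≤ ∫ s in a..t, (t-s)^(γ-1) * M := by
            apply intervalIntegral.integral_mono_on hat.le hInt2 (hrpow_int.mul_const M)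
            intro s hs
            have hws : w s ≤ M := ht₀max ⟨hs.1, hs.2.trans ht.2⟩
            have hnn : (0:ℝ) ≤ (t - s)^(γ-1) := Real.rpow_nonneg (by linarith [hs.2]) _
            exact mul_le_mul_of_nonneg_left hws hnn
          have hval : (∫ s in a..t, (t-s)^(γ-1)) = (t-a)^γ / γ := by
            have h1 : (∫ s in a..t, (t-s)^(γ-1))
                = ∫ x in (t-t)..(t-a), x ^ (γ-1) :=
              intervalIntegral.integral_comp_sub_left (fun x : ℝ => x ^ (γ-1)) t
            have h2 : (∫ x in (0:ℝ)..(t - a), x ^ (γ - 1))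
                = ((t-a) ^ (γ - 1 + 1) - (0:ℝ) ^ (γ - 1 + 1)) / (γ - 1 + 1) :=
              aux_integral_rpow (by linarith)
            rw [h1, sub_self, h2, Real.zero_rpow (by linarith : γ - 1 + 1 ≠ 0),
              sub_add_cancel]
            ring
          have hmulM : (∫ s in a..t, (t-s)^(γ-1) * M) = (t-a)^γ / γ * M := by
            rw [intervalIntegral.integral_mul_const, hval]
          have hwt := hw t ⟨ha0.trans hat.le, htT⟩
          rw [hsplit] at hwt
          have h6 : (t-a)^γ ≤ δ^γ := Real.rpow_le_rpow hta.le htaδ hγ0.le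
          have h7 : (∫ s in a..t, (t-s)^(γ-1) * w s) ≤ δ^γ / γ * M := by
            rw [hmulM] at hmono
            refine hmono.trans ?_
            apply mul_le_mul_of_nonneg_right _ hM0
            gcongr
          have h8 : w t ≤ K * (δ^γ / γ * M) := by
            refine hwt.trans ?_
            exact mul_le_mul_of_nonneg_left h7 hKpos.le
          have h9 : K * (δ^γ / γ * M) = (1/2) * M := by
            rw [hδγ, hcdef]
            field_simp
          linarith [h8, h9.symm ▸ h8]
      have hMz : M = 0 := by
        have := hbound t₀ ht₀mem
        linarith
      intro t ht
      rcases le_or_gt t a with h | h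
      · exact ih t ⟨ht.1, h⟩
      · have hb : t ∈ Icc a b := ⟨h.le, ht.2⟩
        have h1 := hbound t hb
        rw [hMz] at h1
        have h2 := hwnn t ⟨ht.1, ht.2.trans hbT⟩
        linarith
  intro t ht
  obtain ⟨n, hn⟩ := exists_nat_ge (T/δ)
  have hTn : T ≤ (n:ℝ)*δ := by
    rw [div_le_iff₀ hδpos] at hn
    linarith
  exact key n t (by rwa [min_eq_right hTn])
end

section
/- (Energy dissipation for Caputo gradient flows.) Let 0 < γ < 1, T ∈ (0, ∞], let E : ℝ^m → ℝ be convex and continuously differentiable, and let v : [0, T) → ℝ^m be continuously differentiable and satisfy, for all t ∈ (0, T), the Caputo gradient-flow equation (1/Γ(1−γ)) ∫_0^t (t−s)^{−γ} v′(s) ds = −∇E(v(t)). Then E(v(t)) ≤ E(v(0)) for all t ∈ [0, T). -/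
open MeasureTheory Set
open scoped ENNReal

/-!
Let `p` maximise `E ∘ v` on `[0, t]`, put `G = ∇E (v p)` and `w = ⟪G, v ·⟫`. By convexity
`w s - w p ≤ E (v s) - E (v p) ≤ 0` on `[0, p]`, so `w` is also maximal at `p`. At a maximum the
Caputo integral is at least `p ^ (-γ) * (w p - w 0)`: integrate by parts on `[0, a]` against the
kernel `(p - s) ^ (-γ)`, whose derivative is nonnegative, and let `a → p`. The gradient-flow
equation makes the same integral `-Γ(1 - γ) ‖G‖² ≤ 0`, so `w p ≤ w 0`, and convexity once more
gives `E (v p) ≤ E (v 0)`.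
-/

open Filter Topology
open InnerProductSpace

theorem ConvexOn.apply_sub_le_of_hasFDerivAt {F : Type*} [NormedAddCommGroup F] [NormedSpace ℝ F]
    {f : F → ℝ} (hf : ConvexOn ℝ univ f) {f' : F →L[ℝ] ℝ} {y : F} (hd : HasFDerivAt f f' y)
    (x : F) : f' (x - y) ≤ f x - f y := by
  have hline : ConvexOn ℝ univ (f ∘ AffineMap.lineMap (k := ℝ) y x) := hf.comp_affineMap _
  have hderiv : HasDerivAt (f ∘ AffineMap.lineMap (k := ℝ) y x) (f' (x - y)) 0 := by
    have hd0 : HasFDerivAt f f' (AffineMap.lineMap y x (0 : ℝ)) := by simpa using hd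
    exact hd0.comp_hasDerivAt (0 : ℝ) AffineMap.hasDerivAt_lineMap
  simpa [slope_def_field] using hline.le_slope_of_hasDerivAt trivial trivial one_pos hderiv

theorem ConvexOn.inner_sub_le_of_hasGradientAt {F : Type*} [NormedAddCommGroup F]
    [InnerProductSpace ℝ F] [CompleteSpace F] {f : F → ℝ} (hf : ConvexOn ℝ univ f) {G y : F}
    (hG : HasGradientAt f G y) (x : F) : ⟪G, x - y⟫_ℝ ≤ f x - f y := by
  simpa using hf.apply_sub_le_of_hasFDerivAt hG.hasFDerivAt x

theorem intervalIntegrable_sub_rpow_smul {F : Type*} [NormedAddCommGroup F] [NormedSpace ℝ F]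
    {γ c p : ℝ} (hγ : γ < 1) (hcp : c ≤ p) {f : ℝ → F} (hf : ContinuousOn f (Icc c p)) :
    IntervalIntegrable (fun s => (p - s) ^ (-γ) • f s) volume c p := by
  have hker : IntervalIntegrable (fun s => (p - s) ^ (-γ)) volume c p := by
    simpa using ((intervalIntegral.intervalIntegrable_rpow' (a := 0) (b := p - c)
      (r := -γ) (by linarith)).comp_sub_left p).symm
  rw [intervalIntegrable_iff_integrableOn_Ioc_of_le hcp] at hker ⊢
  exact hker.smul_continuousOn_of_subset hf measurableSet_Ioc isCompact_Icc Ioc_subset_Icc_self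

theorem HasDerivAt.tendsto_sub_rpow_mul_sub_nhdsLT {w : ℝ → ℝ} {w' p γ : ℝ}
    (hw : HasDerivAt w w' p) (hγ : γ < 1) :
    Tendsto (fun a => (p - a) ^ (-γ) * (w a - w p)) (𝓝[<] p) (𝓝 0) := by
  have hslope : Tendsto (slope w p) (𝓝[<] p) (𝓝 w') :=
    hw.tendsto_slope.mono_left (nhdsWithin_mono _ fun _ h => ne_of_lt h)
  have hpow : Tendsto (fun a => (p - a) ^ (1 - γ)) (𝓝[<] p) (𝓝 0) := by
    have : ContinuousAt (fun a => (p - a) ^ (1 - γ)) p :=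
      (continuousAt_const.sub continuousAt_id).rpow_const (Or.inr (by linarith))
    simpa [Real.zero_rpow (by linarith : 1 - γ ≠ 0)] using this.tendsto.mono_left nhdsWithin_le_nhds
  have hprod := (hpow.mul hslope).neg
  rw [zero_mul, neg_zero] at hprod
  refine hprod.congr' (eventually_nhdsWithin_of_forall fun a (ha : a < p) => ?_)
  have hap : a - p ≠ 0 := by linarith
  rw [slope_def_field, sub_eq_add_neg (1 : ℝ), Real.rpow_add (by linarith), Real.rpow_one]
  field_simp
  ring

theorem sub_rpow_mul_sub_le_integral_sub_rpow_mul_deriv {w w' : ℝ → ℝ} {γ c a p : ℝ}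
    (hγ : 0 ≤ γ) (hca : c ≤ a) (hap : a < p) (hw : ∀ s ∈ Icc c a, HasDerivAt w (w' s) s)
    (hw' : IntervalIntegrable w' volume c a) (hmax : ∀ s ∈ Icc c a, w s ≤ w p) :
    (p - a) ^ (-γ) * (w a - w p) + (p - c) ^ (-γ) * (w p - w c) ≤
      ∫ s in c..a, (p - s) ^ (-γ) * w' s := by
  set u : ℝ → ℝ := fun s => (p - s) ^ (-γ)
  set u' : ℝ → ℝ := fun s => γ * (p - s) ^ (-γ - 1)
  have hu : ∀ s ∈ Icc c a, HasDerivAt u (u' s) s := by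
    intro s hs
    have hps : p - s ≠ 0 := by linarith [hs.2]
    convert ((hasDerivAt_id' s).const_sub p).rpow_const (p := -γ) (Or.inl hps) using 1
    simp only [u']
    ring
  have hu'cont : ContinuousOn u' (Icc c a) :=
    continuousOn_const.mul <| ContinuousOn.rpow_const (f := fun s => p - s) (by fun_prop)
      fun s hs => Or.inl (sub_pos.2 (hs.2.trans_lt hap)).ne'
  have hwcont : ContinuousOn w (Icc c a) := fun s hs => (hw s hs).continuousAt.continuousWithinAt
  have hu'nonneg : ∀ s ∈ Icc c a, 0 ≤ u' s := fun s hs =>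
    mul_nonneg hγ (Real.rpow_nonneg (by linarith [hs.2]) _)
  have hibp : ∫ s in c..a, u s * w' s = u a * w a - u c * w c - ∫ s in c..a, u' s * w s :=
    intervalIntegral.integral_mul_deriv_eq_deriv_mul (by rwa [uIcc_of_le hca])
      (by rwa [uIcc_of_le hca]) (hu'cont.intervalIntegrable_of_Icc hca) hw'
  have hftc : ∫ s in c..a, u' s = u a - u c :=
    intervalIntegral.integral_eq_sub_of_hasDerivAt (by rwa [uIcc_of_le hca])
      (hu'cont.intervalIntegrable_of_Icc hca)
  have hmono : ∫ s in c..a, u' s * w s ≤ ∫ s in c..a, u' s * w p :=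
    intervalIntegral.integral_mono_on hca ((hu'cont.mul hwcont).intervalIntegrable_of_Icc hca)
      ((hu'cont.mul continuousOn_const).intervalIntegrable_of_Icc hca)
      fun s hs => mul_le_mul_of_nonneg_left (hmax s hs) (hu'nonneg s hs)
  rw [intervalIntegral.integral_mul_const, hftc] at hmono
  change _ ≤ ∫ s in c..a, u s * w' s
  rw [hibp]
  linarith

theorem sub_rpow_mul_sub_le_integral_of_isMaxOn {w w' : ℝ → ℝ} {γ c p : ℝ} (hγ0 : 0 ≤ γ)
    (hγ1 : γ < 1) (hcp : c < p) (hw : ∀ s ∈ Icc c p, HasDerivAt w (w' s) s)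
    (hw' : ContinuousOn w' (Icc c p)) (hmax : IsMaxOn w (Icc c p) p) :
    (p - c) ^ (-γ) * (w p - w c) ≤ ∫ s in c..p, (p - s) ^ (-γ) * w' s := by
  have hint : IntervalIntegrable (fun s => (p - s) ^ (-γ) * w' s) volume c p :=
    intervalIntegrable_sub_rpow_smul hγ1 hcp.le hw'
  have hprim : Tendsto (fun a => ∫ s in c..a, (p - s) ^ (-γ) * w' s) (𝓝[<] p)
      (𝓝 (∫ s in c..p, (p - s) ^ (-γ) * w' s)) := by
    have := intervalIntegral.continuousOn_primitive_interval' hint left_mem_uIcc p right_mem_uIcc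
    rw [uIcc_of_le hcp.le] at this
    exact this.tendsto.mono_left (nhdsWithin_le_of_mem (Icc_mem_nhdsLT hcp))
  have hbdry := ((hw p (right_mem_Icc.2 hcp.le)).tendsto_sub_rpow_mul_sub_nhdsLT hγ1).add_const
    ((p - c) ^ (-γ) * (w p - w c))
  rw [zero_add] at hbdry
  refine le_of_tendsto_of_tendsto hbdry hprim ?_
  filter_upwards [Ioo_mem_nhdsLT hcp] with a ha
  have hsub : Icc c a ⊆ Icc c p := Icc_subset_Icc_right ha.2.le
  exact sub_rpow_mul_sub_le_integral_sub_rpow_mul_deriv hγ0 ha.1.le ha.2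
    (fun s hs => hw s (hsub hs)) ((hw'.mono hsub).intervalIntegrable_of_Icc ha.1.le)
    (fun s hs => hmax (hsub hs))

theorem inner_intervalIntegral_sub_rpow_smul {F : Type*} [NormedAddCommGroup F]
    [InnerProductSpace ℝ F] [CompleteSpace F] {γ c p : ℝ} (hγ : γ < 1) (hcp : c ≤ p)
    {f : ℝ → F} (hf : ContinuousOn f (Icc c p)) (G : F) :
    ⟪G, ∫ s in c..p, (p - s) ^ (-γ) • f s⟫_ℝ = ∫ s in c..p, (p - s) ^ (-γ) * ⟪G, f s⟫_ℝ := by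
  have := (innerSL ℝ G).intervalIntegral_comp_comm (intervalIntegrable_sub_rpow_smul hγ hcp hf)
  simpa only [innerSL_apply_apply, real_inner_smul_right] using this.symm

theorem integral_sub_rpow_mul_inner_nonpos {F : Type*} [NormedAddCommGroup F]
    [InnerProductSpace ℝ F] [CompleteSpace F] {γ c p : ℝ} (hγ : γ < 1) (hcp : c ≤ p)
    {f : ℝ → F} (hf : ContinuousOn f (Icc c p)) {G : F}
    (h : (1 / Real.Gamma (1 - γ)) • ∫ s in c..p, (p - s) ^ (-γ) • f s = -G) :
    ∫ s in c..p, (p - s) ^ (-γ) * ⟪G, f s⟫_ℝ ≤ 0 := by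
  have hΓ : 0 < Real.Gamma (1 - γ) := Real.Gamma_pos_of_pos (by linarith)
  have hI : ∫ s in c..p, (p - s) ^ (-γ) • f s = Real.Gamma (1 - γ) • -G := by
    rw [← h, smul_smul, mul_one_div_cancel hΓ.ne', one_smul]
  rw [← inner_intervalIntegral_sub_rpow_smul hγ hcp hf, hI, real_inner_smul_right,
    inner_neg_right, real_inner_self_eq_norm_sq]
  exact mul_nonpos_of_nonneg_of_nonpos hΓ.le (neg_nonpos.2 (sq_nonneg _))

theorem caputo_gradient_flow_energy_dissipation_general
    (γ : ℝ) (hγ0 : 0 < γ) (hγ1 : γ < 1) (T : ℝ≥0∞) (m : ℕ)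
    (E : EuclideanSpace ℝ (Fin m) → ℝ)
    (g : EuclideanSpace ℝ (Fin m) → EuclideanSpace ℝ (Fin m))
    (hconv : ConvexOn ℝ Set.univ E)
    (hgrad : ∀ x : EuclideanSpace ℝ (Fin m), HasGradientAt E (g x) x)
    (v v' : ℝ → EuclideanSpace ℝ (Fin m))
    (hderiv : ∀ t : ℝ, 0 ≤ t → ENNReal.ofReal t < T → HasDerivAt v (v' t) t)
    (hv'cont : ContinuousOn v' {t : ℝ | 0 ≤ t ∧ ENNReal.ofReal t < T})
    (heq : ∀ t : ℝ, 0 < t → ENNReal.ofReal t < T →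
      (1 / Real.Gamma (1 - γ)) • (∫ s in (0:ℝ)..t, (t - s) ^ (-γ) • v' s) =
        -g (v t)) :
    ∀ t : ℝ, 0 ≤ t → ENNReal.ofReal t < T → E (v t) ≤ E (v 0) := by
  intro t ht0 htT
  have hdom : Icc 0 t ⊆ {s : ℝ | 0 ≤ s ∧ ENNReal.ofReal s < T} := fun s hs =>
    ⟨hs.1, (ENNReal.ofReal_le_ofReal hs.2).trans_lt htT⟩
  have hv : ∀ s ∈ Icc 0 t, HasDerivAt v (v' s) s := fun s hs => hderiv s (hdom hs).1 (hdom hs).2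
  have hE : Continuous E := continuous_iff_continuousAt.2 fun x => (hgrad x).continuousAt
  obtain ⟨p, hp, hpmax⟩ := isCompact_Icc.exists_isMaxOn (nonempty_Icc.2 ht0)
    (hE.comp_continuousOn fun s hs => (hv s hs).continuousAt.continuousWithinAt)
  refine (isMaxOn_iff.1 hpmax t (right_mem_Icc.2 ht0)).trans (?_ : E (v p) ≤ E (v 0))
  rcases hp.1.eq_or_lt with rfl | hp0
  · exact le_rfl
  have hsub : Icc 0 p ⊆ Icc 0 t := Icc_subset_Icc_right hp.2
  set G := g (v p)
  have hsubgrad (s : ℝ) : ⟪G, v s⟫_ℝ - ⟪G, v p⟫_ℝ ≤ E (v s) - E (v p) := by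
    simpa [inner_sub_right] using hconv.inner_sub_le_of_hasGradientAt (hgrad (v p)) (v s)
  have hwmax : IsMaxOn (fun s => ⟪G, v s⟫_ℝ) (Icc 0 p) p := isMaxOn_iff.2 fun s hs => by
    linarith [hsubgrad s, show E (v s) ≤ E (v p) from isMaxOn_iff.1 hpmax s (hsub hs)]
  have hv'p : ContinuousOn v' (Icc 0 p) := hv'cont.mono (hsub.trans hdom)
  have hcaputo : ∫ s in (0:ℝ)..p, (p - s) ^ (-γ) * ⟪G, v' s⟫_ℝ ≤ 0 :=
    integral_sub_rpow_mul_inner_nonpos hγ1 hp0.le hv'p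
      (heq p hp0 (hdom (hsub (right_mem_Icc.2 hp0.le))).2)
  have hfrac := sub_rpow_mul_sub_le_integral_of_isMaxOn hγ0.le hγ1 hp0
    (fun s hs => by simpa using (hasDerivAt_const s G).inner ℝ (hv s (hsub hs)))
    (continuousOn_const.inner hv'p) hwmax
  have hw : ⟪G, v p⟫_ℝ ≤ ⟪G, v 0⟫_ℝ := by
    have := nonpos_of_mul_nonpos_right (hfrac.trans hcaputo) (by positivity)
    linarith
  linarith [hsubgrad 0]

/-- Energy dissipation for Caputo gradient flows: for `0 < γ < 1`, `T ∈ (0,∞]`,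
`E : ℝ^m → ℝ` convex and continuously differentiable (with gradient `g`), and
`v : [0,T) → ℝ^m` continuously differentiable satisfying the Caputo gradient-flow
equation `(1/Γ(1−γ)) ∫_0^t (t−s)^{−γ} v'(s) ds = −∇E(v(t))` for all `t ∈ (0,T)`,
one has `E(v(t)) ≤ E(v(0))` for all `t ∈ [0,T)`. -/
theorem caputo_gradient_flow_energy_dissipation
    (γ : ℝ) (hγ0 : 0 < γ) (hγ1 : γ < 1) (T : ℝ≥0∞) (hT : 0 < T) (m : ℕ)
    (E : EuclideanSpace ℝ (Fin m) → ℝ)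
    (g : EuclideanSpace ℝ (Fin m) → EuclideanSpace ℝ (Fin m))
    (hconv : ConvexOn ℝ Set.univ E)
    (hgrad : ∀ x : EuclideanSpace ℝ (Fin m), HasGradientAt E (g x) x)
    (hgcont : Continuous g)
    (v v' : ℝ → EuclideanSpace ℝ (Fin m))
    (hderiv : ∀ t : ℝ, 0 ≤ t → ENNReal.ofReal t < T → HasDerivAt v (v' t) t)
    (hv'cont : ContinuousOn v' {t : ℝ | 0 ≤ t ∧ ENNReal.ofReal t < T})
    (heq : ∀ t : ℝ, 0 < t → ENNReal.ofReal t < T →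
      (1 / Real.Gamma (1 - γ)) • (∫ s in (0:ℝ)..t, (t - s) ^ (-γ) • v' s) =
        -g (v t)) :
    ∀ t : ℝ, 0 ≤ t → ENNReal.ofReal t < T → E (v t) ≤ E (v 0) :=
  caputo_gradient_flow_energy_dissipation_general γ hγ0 hγ1 T m E g hconv hgrad v v' hderiv hv'cont
    heq
end
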